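/- arXiv:2605.01586 — 6 statements merged into one kernel-verified Lean document; each statement's English description precedes it below -/
import Mathlib

section
/- If X and Y are i.i.d. uniform on [0,1] and a > 0, then the random variable √a · sin(2πY) · √(X^{−2/a} − 1) has the Student-t distribution with parameter a, i.e., its density is proportional to (1 + x²/a)^{−(a+1)/2}. -/
open Real MeasureTheory Set
open scoped ENNReal

noncomputable def bpS (a u : ℝ) : ℝ := Real.sqrt a * Real.sqrt (u ^ (-2/a) - 1)
noncomputable def bpS' (a u : ℝ) : ℝ :=
  Real.sqrt a * ((-2/a) * u ^ (-2/a - 1) / (2 * Real.sqrt (u ^ (-2/a) - 1)))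
noncomputable def bpPhi (a : ℝ) (p : ℝ × ℝ) : ℝ × ℝ :=
  (bpS a p.1 * Real.cos (2*π*p.2), bpS a p.1 * Real.sin (2*π*p.2))
noncomputable def bpB (a : ℝ) (p : ℝ × ℝ) : ℝ × ℝ →L[ℝ] ℝ × ℝ :=
  LinearMap.toContinuousLinearMap (Matrix.toLin (Module.Basis.finTwoProd ℝ) (Module.Basis.finTwoProd ℝ)
    !![bpS' a p.1 * Real.cos (2*π*p.2), bpS a p.1 * (-Real.sin (2*π*p.2) * (2*π));
       bpS' a p.1 * Real.sin (2*π*p.2), bpS a p.1 * (Real.cos (2*π*p.2) * (2*π))])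

theorem bp_one_lt {a u : ℝ} (ha : 0 < a) (hu : u ∈ Ioo (0:ℝ) 1) : 1 < u ^ (-2/a) := by
  rw [Real.one_lt_rpow_iff_of_pos hu.1]
  exact Or.inr ⟨hu.2, div_neg_of_neg_of_pos (by norm_num) ha⟩

theorem bpS_pos {a u : ℝ} (ha : 0 < a) (hu : u ∈ Ioo (0:ℝ) 1) : 0 < bpS a u := by
  have := bp_one_lt ha hu
  have h1 : 0 < u ^ (-2/a) - 1 := by linarith
  unfold bpS
  positivity

theorem hasDerivAt_bpS {a u : ℝ} (ha : 0 < a) (hu : u ∈ Ioo (0:ℝ) 1) :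
    HasDerivAt (bpS a) (bpS' a u) u := by
  have h1 : 0 < u ^ (-2/a) - 1 := by linarith [bp_one_lt ha hu]
  have hg : HasDerivAt (fun u : ℝ => u ^ (-2/a) - 1) ((-2/a) * u ^ (-2/a - 1)) u :=
    (Real.hasDerivAt_rpow_const (Or.inl hu.1.ne')).sub_const 1
  have hs := (Real.hasDerivAt_sqrt h1.ne').comp u hg
  have hs2 := hs.const_mul (Real.sqrt a)
  refine hs2.congr_deriv ?_
  unfold bpS'; ring

theorem bpS_mul_bpS' {a u : ℝ} (ha : 0 < a) (hu : u ∈ Ioo (0:ℝ) 1) :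
    bpS a u * bpS' a u = -(u ^ (-2/a - 1)) := by
  have h1 : 0 < u ^ (-2/a) - 1 := by linarith [bp_one_lt ha hu]
  have hsq : Real.sqrt (u ^ (-2/a) - 1) ≠ 0 := by positivity
  have hsa : Real.sqrt a * Real.sqrt a = a := Real.mul_self_sqrt ha.le
  have key : Real.sqrt (u ^ (-2/a) - 1) *
      ((-2/a) * u ^ (-2/a - 1) / (2 * Real.sqrt (u ^ (-2/a) - 1)))
      = (-2/a) * u ^ (-2/a - 1) / 2 := by
    field_simp
    rw [mul_div_cancel_left₀ _ (by rwa [neg_div] at hsq)]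
  unfold bpS bpS'
  calc Real.sqrt a * Real.sqrt (u ^ (-2/a) - 1) *
        (Real.sqrt a * ((-2/a) * u ^ (-2/a - 1) / (2 * Real.sqrt (u ^ (-2/a) - 1))))
      = (Real.sqrt a * Real.sqrt a) * (Real.sqrt (u ^ (-2/a) - 1) *
        ((-2/a) * u ^ (-2/a - 1) / (2 * Real.sqrt (u ^ (-2/a) - 1)))) := by ring
    _ = a * ((-2/a) * u ^ (-2/a - 1) / 2) := by rw [hsa, key]
    _ = -(u ^ (-2/a - 1)) := by field_simp

theorem hasFDerivAt_bpPhi {a : ℝ} (ha : 0 < a) {p : ℝ × ℝ} (hp : p.1 ∈ Ioo (0:ℝ) 1) :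
    HasFDerivAt (bpPhi a) (bpB a p) p := by
  unfold bpB
  rw [Matrix.toLin_finTwoProd_toContinuousLinearMap]
  have hS : HasFDerivAt (fun q : ℝ × ℝ => bpS a q.1)
      ((bpS' a p.1) • ContinuousLinearMap.fst ℝ ℝ ℝ) p :=
    (hasDerivAt_bpS ha hp).comp_hasFDerivAt p hasFDerivAt_fst
  have hc : HasDerivAt (fun t : ℝ => Real.cos (2*π*t)) (-Real.sin (2*π*p.2) * (2*π)) p.2 := by
    have h1 : HasDerivAt (fun t : ℝ => 2*π*t) (2*π) p.2 := by
      simpa using (hasDerivAt_id p.2).const_mul (2*π)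
    exact (Real.hasDerivAt_cos (2*π*p.2)).comp p.2 h1
  have hsn : HasDerivAt (fun t : ℝ => Real.sin (2*π*t)) (Real.cos (2*π*p.2) * (2*π)) p.2 := by
    have h1 : HasDerivAt (fun t : ℝ => 2*π*t) (2*π) p.2 := by
      simpa using (hasDerivAt_id p.2).const_mul (2*π)
    exact (Real.hasDerivAt_sin (2*π*p.2)).comp p.2 h1
  have hcF : HasFDerivAt (fun q : ℝ × ℝ => Real.cos (2*π*q.2))
      ((-Real.sin (2*π*p.2) * (2*π)) • ContinuousLinearMap.snd ℝ ℝ ℝ) p :=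
    hc.comp_hasFDerivAt p hasFDerivAt_snd
  have hsF : HasFDerivAt (fun q : ℝ × ℝ => Real.sin (2*π*q.2))
      ((Real.cos (2*π*p.2) * (2*π)) • ContinuousLinearMap.snd ℝ ℝ ℝ) p :=
    hsn.comp_hasFDerivAt p hasFDerivAt_snd
  convert HasFDerivAt.prodMk (hS.mul hcF) (hS.mul hsF) using 2 <;> (try rfl) <;>
    simp [smul_smul, mul_comm, mul_assoc, mul_left_comm] <;> module

theorem bpPhi_normSq {a : ℝ} (ha : 0 < a) {p : ℝ × ℝ} (hp : p.1 ∈ Ioo (0:ℝ) 1) :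
    (bpPhi a p).1 ^ 2 + (bpPhi a p).2 ^ 2 = a * (p.1 ^ (-2/a) - 1) := by
  have h1 : (0:ℝ) ≤ p.1 ^ (-2/a) - 1 := by linarith [bp_one_lt ha hp]
  have ht := Real.sin_sq_add_cos_sq (2*π*p.2)
  have hS : bpS a p.1 ^ 2 = a * (p.1 ^ (-2/a) - 1) := by
    rw [bpS, mul_pow, Real.sq_sqrt ha.le, Real.sq_sqrt h1]
  simp only [bpPhi]
  linear_combination (bpS a p.1 ^2) * ht + hS

theorem bpB_det {a : ℝ} (ha : 0 < a) {p : ℝ × ℝ} (hp : p.1 ∈ Ioo (0:ℝ) 1) :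
    (bpB a p).det = -(2*π) * p.1 ^ (-2/a - 1) := by
  have h := bpS_mul_bpS' ha hp
  have ht := Real.sin_sq_add_cos_sq (2*π*p.2)
  simp only [bpB, LinearMap.det_toContinuousLinearMap, LinearMap.det_toLin,
    Matrix.det_fin_two_of]
  linear_combination (2*π*(bpS a p.1 * bpS' a p.1)) * ht + (2*π) * h

-- squared radius

theorem one_add_bpPhi_normSq {a : ℝ} (ha : 0 < a) {p : ℝ × ℝ} (hp : p.1 ∈ Ioo (0:ℝ) 1) :
    1 + ((bpPhi a p).1 ^ 2 + (bpPhi a p).2 ^ 2) / a = p.1 ^ (-2/a) := by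
  rw [bpPhi_normSq ha hp]; field_simp; ring

-- inverse of bpS

theorem bpS_inv {a r : ℝ} (ha : 0 < a) (hr : 0 < r) :
    (1 + r^2/a) ^ (-a/2 : ℝ) ∈ Ioo (0:ℝ) 1 ∧
    ((1 + r^2/a) ^ (-a/2 : ℝ)) ^ (-2/a) = 1 + r^2/a ∧
    bpS a ((1 + r^2/a) ^ (-a/2 : ℝ)) = r := by
  have hb : (1:ℝ) < 1 + r^2/a := by
    have : 0 < r^2/a := by positivity
    linarith
  have hbpos : (0:ℝ) < 1 + r^2/a := by linarith
  have hmem : (1 + r^2/a) ^ (-a/2 : ℝ) ∈ Ioo (0:ℝ) 1 := by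
    constructor
    · positivity
    · exact Real.rpow_lt_one_of_one_lt_of_neg hb (by linarith [half_pos ha])
  have hrw : ((1 + r^2/a) ^ (-a/2 : ℝ)) ^ (-2/a) = 1 + r^2/a := by
    rw [← Real.rpow_mul hbpos.le]
    have : (-a/2) * (-2/a) = 1 := by field_simp
    rw [this, Real.rpow_one]
  refine ⟨hmem, hrw, ?_⟩
  rw [bpS, hrw]
  have h2 : 1 + r^2/a - 1 = r^2/a := by ring
  rw [h2, ← Real.sqrt_mul ha.le]
  have h3 : a * (r^2/a) = r^2 := by field_simp
  rw [h3, Real.sqrt_sq hr.le]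

theorem bpS_strictAnti {a : ℝ} (ha : 0 < a) : StrictAntiOn (bpS a) (Ioo (0:ℝ) 1) := by
  intro u hu u' hu' h
  have h1 : u' ^ (-2/a) < u ^ (-2/a) :=
    Real.rpow_lt_rpow_of_neg hu.1 h (div_neg_of_neg_of_pos (by norm_num) ha)
  have h2 : (0:ℝ) < u' ^ (-2/a) - 1 := by linarith [bp_one_lt ha hu']
  unfold bpS
  have h3 : Real.sqrt (u' ^ (-2/a) - 1) < Real.sqrt (u ^ (-2/a) - 1) :=
    Real.sqrt_lt_sqrt h2.le (by linarith)
  exact mul_lt_mul_of_pos_left h3 (Real.sqrt_pos.2 ha)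

theorem angle_inj {θ θ' : ℝ} (h : θ ∈ Ioo 0 (2*π)) (h' : θ' ∈ Ioo 0 (2*π))
    (hc : Real.cos θ = Real.cos θ') (hs : Real.sin θ = Real.sin θ') : θ = θ' := by
  have h1 : Real.cos (θ - θ') = 1 := by
    rw [Real.cos_sub, hc, hs]
    exact Real.sin_sq_add_cos_sq θ' ▸ by nlinarith [Real.sin_sq_add_cos_sq θ']
  have h2 : θ - θ' = 0 := by
    rw [Real.cos_eq_one_iff_of_lt_of_lt (by linarith [h.1, h'.2]) (by linarith [h.2, h'.1])] at h1
    exact h1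
  linarith

theorem bpPhi_injOn {a : ℝ} (ha : 0 < a) :
    InjOn (bpPhi a) (Ioo (0:ℝ) 1 ×ˢ Ioo (0:ℝ) 1) := by
  rintro p hp q hq hpq
  obtain ⟨hp1, hp2⟩ := hp
  obtain ⟨hq1, hq2⟩ := hq
  have hSp := bpS_pos ha hp1
  have hSq := bpS_pos ha hq1
  have e1 : bpPhi a p = bpPhi a q := hpq
  have hx : bpS a p.1 * Real.cos (2*π*p.2) = bpS a q.1 * Real.cos (2*π*q.2) :=
    congrArg Prod.fst e1
  have hy : bpS a p.1 * Real.sin (2*π*p.2) = bpS a q.1 * Real.sin (2*π*q.2) :=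
    congrArg Prod.snd e1
  have hr : bpS a p.1 = bpS a q.1 := by
    have hsq : bpS a p.1 ^ 2 = bpS a q.1 ^ 2 := by
      have t1 := Real.sin_sq_add_cos_sq (2*π*p.2)
      have t2 := Real.sin_sq_add_cos_sq (2*π*q.2)
      have key : (bpS a p.1 * Real.cos (2*π*p.2))^2 + (bpS a p.1 * Real.sin (2*π*p.2))^2
          = (bpS a q.1 * Real.cos (2*π*q.2))^2 + (bpS a q.1 * Real.sin (2*π*q.2))^2 := by
        rw [hx, hy]
      linear_combination key - (bpS a p.1^2) * t1 + (bpS a q.1^2) * t2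
    rw [← Real.sqrt_sq hSp.le, ← Real.sqrt_sq hSq.le, hsq]
  have h1 : p.1 = q.1 := (bpS_strictAnti ha).injOn hp1 hq1 hr
  have hππ : (0:ℝ) < 2*π := by positivity
  have hθp : 2*π*p.2 ∈ Ioo 0 (2*π) := by
    constructor
    · exact mul_pos hππ hp2.1
    · calc 2*π*p.2 < 2*π*1 := by exact mul_lt_mul_of_pos_left hp2.2 hππ
        _ = 2*π := by ring
  have hθq : 2*π*q.2 ∈ Ioo 0 (2*π) := by
    constructor
    · exact mul_pos hππ hq2.1
    · calc 2*π*q.2 < 2*π*1 := by exact mul_lt_mul_of_pos_left hq2.2 hππ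
        _ = 2*π := by ring
  have hc : Real.cos (2*π*p.2) = Real.cos (2*π*q.2) := by
    rw [hr] at hx; exact mul_left_cancel₀ hSq.ne' hx
  have hsn : Real.sin (2*π*p.2) = Real.sin (2*π*q.2) := by
    rw [hr] at hy; exact mul_left_cancel₀ hSq.ne' hy
  have h2 : p.2 = q.2 := by
    have := angle_inj hθp hθq hc hsn
    have h2π : (2*π) ≠ 0 := hππ.ne'
    field_simp at this
    tauto
  exact Prod.ext h1 h2

theorem bpPhi_image {a : ℝ} (ha : 0 < a) {z : ℝ × ℝ} (hz : ¬(z.2 = 0 ∧ 0 ≤ z.1)) :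
    z ∈ bpPhi a '' (Ioo (0:ℝ) 1 ×ˢ Ioo (0:ℝ) 1) := by
  set w : ℂ := Complex.equivRealProd.symm z with hw
  have hwre : w.re = z.1 := rfl
  have hwim : w.im = z.2 := rfl
  have hw0 : w ≠ 0 := by
    intro h
    apply hz
    rw [← hwim, ← hwre, h]
    simp
  have hr : 0 < ‖w‖ := by simpa using hw0
  set r := ‖w‖ with hrdef
  have harg0 : Complex.arg w ≠ 0 := by
    intro h
    rw [Complex.arg_eq_zero_iff] at h
    exact hz ⟨by rw [← hwim]; exact h.2, by rw [← hwre]; exact h.1⟩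
  have hargIoc := Complex.arg_mem_Ioc w
  have hπ : (0:ℝ) < π := Real.pi_pos
  set θ : ℝ := if 0 < Complex.arg w then Complex.arg w else Complex.arg w + 2*π with hθdef
  have hθmem : θ ∈ Ioo 0 (2*π) := by
    rw [hθdef]
    split_ifs with h
    · exact ⟨h, by linarith [hargIoc.2]⟩
    · push_neg at h
      have hlt : Complex.arg w < 0 := lt_of_le_of_ne h harg0
      constructor <;> [linarith [hargIoc.1]; linarith]
  have hcos : Real.cos θ = Real.cos (Complex.arg w) := by
    rw [hθdef]; split_ifs with h; · rfl
    · exact Real.cos_add_two_pi _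
  have hsin : Real.sin θ = Real.sin (Complex.arg w) := by
    rw [hθdef]; split_ifs with h; · rfl
    · exact Real.sin_add_two_pi _
  obtain ⟨humem, _, hSu⟩ := bpS_inv ha hr
  refine ⟨((1 + r^2/a) ^ (-a/2 : ℝ), θ / (2*π)), ⟨humem, ?_, ?_⟩, ?_⟩
  · exact div_pos hθmem.1 (by positivity)
  · rw [div_lt_one (by positivity)]; exact hθmem.2
  · have h2π : (2*π) ≠ 0 := by positivity
    have hθv : 2*π*(θ/(2*π)) = θ := by field_simp
    have hre : r * Real.cos (Complex.arg w) = z.1 := by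
      rw [Complex.cos_arg hw0, hwre]; field_simp [hrdef]; rw [hrdef]; ring
    have him : r * Real.sin (Complex.arg w) = z.2 := by
      rw [Complex.sin_arg, hwim]; field_simp [hrdef]; rw [hrdef]; ring
    show bpPhi a _ = z
    rw [bpPhi]
    dsimp only
    rw [hθv, hSu, hcos, hsin]
    exact Prod.ext (by rw [hre]) (by rw [him])

theorem bp_integrable {p : ℝ} (hp : 1 ≤ p) :
    Integrable (fun t : ℝ => (1 + t^2) ^ (-p)) := by
  have hc : Continuous fun t : ℝ => (1 + t^2) ^ (-p) := by
    apply Continuous.rpow_const (by continuity)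
    intro t; left; positivity
  apply integrable_inv_one_add_sq.mono hc.aestronglyMeasurable
  filter_upwards with t
  have h1 : (1:ℝ) ≤ 1 + t^2 := by nlinarith
  have h2 : (0:ℝ) < 1 + t^2 := by nlinarith
  rw [Real.norm_of_nonneg (by positivity), Real.norm_of_nonneg (by positivity)]
  calc (1 + t^2) ^ (-p) ≤ (1 + t^2) ^ (-1:ℝ) :=
        Real.rpow_le_rpow_of_exponent_le h1 (by linarith)
    _ = (1 + t^2)⁻¹ := by rw [Real.rpow_neg_one]

theorem bp_I_pos {p : ℝ} (hp : 1 ≤ p) :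
    0 < ∫ t : ℝ, (1 + t^2) ^ (-p) := by
  rw [integral_pos_iff_support_of_nonneg (fun t => by positivity) (bp_integrable hp)]
  have : Function.support (fun t : ℝ => (1 + t^2) ^ (-p)) = univ := by
    apply eq_univ_of_forall
    intro t
    have h2 : (0:ℝ) < 1 + t^2 := by nlinarith
    simp only [Function.mem_support]
    positivity
  rw [this]
  simp

theorem bp_inner {a : ℝ} (ha : 0 < a) (y : ℝ) :
    (∫ x : ℝ, (1 + (x^2 + y^2)/a) ^ (-(a+2)/2)) =
      (Real.sqrt a * ∫ t : ℝ, (1 + t^2) ^ (-(a+2)/2)) * (1 + y^2/a) ^ (-(a+1)/2) := by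
  set b : ℝ := a + y^2 with hbdef
  have hb : 0 < b := by positivity
  set q : ℝ := 1 + y^2/a with hqdef
  have hq : 0 < q := by positivity
  have hsb : Real.sqrt b ≠ 0 := by positivity
  have hrw : ∀ x : ℝ, (1 + (x^2 + y^2)/a) ^ (-(a+2)/2)
      = q ^ (-(a+2)/2 : ℝ) * (1 + (x / Real.sqrt b)^2) ^ (-(a+2)/2) := by
    intro x
    have h1 : (x / Real.sqrt b)^2 = x^2 / b := by
      rw [div_pow, Real.sq_sqrt hb.le]
    have h2 : 1 + (x^2 + y^2)/a = q * (1 + x^2/b) := by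
      rw [hqdef, hbdef]; field_simp; ring
    rw [h1, h2, Real.mul_rpow hq.le (by positivity)]
  rw [funext hrw, MeasureTheory.integral_const_mul, MeasureTheory.Measure.integral_comp_div
    (fun t : ℝ => (1 + t^2) ^ (-(a+2)/2)) (Real.sqrt b)]
  rw [abs_of_nonneg (Real.sqrt_nonneg b), smul_eq_mul]
  have hbq : b = a * q := by rw [hqdef, hbdef]; field_simp
  have hsplit : Real.sqrt b = Real.sqrt a * q ^ ((1:ℝ)/2) := by
    rw [hbq, Real.sqrt_mul ha.le, Real.sqrt_eq_rpow q]
  have hqpow : q ^ (-(a+2)/2 : ℝ) * q ^ ((1:ℝ)/2) = q ^ (-(a+1)/2 : ℝ) := by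
    rw [← Real.rpow_add hq]
    norm_num
    ring_nf
  rw [hsplit]
  linear_combination (Real.sqrt a * ∫ t : ℝ, (1 + t^2) ^ (-(a+2)/2)) * hqpow


theorem bp_integrable' {a : ℝ} (ha : 0 < a) :
    Integrable (fun t : ℝ => (1 + t^2) ^ (-(a+2)/2)) := by
  have h : -(a+2)/2 = -((a+2)/2) := by ring
  rw [h]; exact bp_integrable (by linarith)

theorem bp_I_pos' {a : ℝ} (ha : 0 < a) :
    0 < ∫ t : ℝ, (1 + t^2) ^ (-(a+2)/2) := by
  have h : -(a+2)/2 = -((a+2)/2) := by ring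
  rw [h]; exact bp_I_pos (by linarith)

theorem bp_inner_integrable {a : ℝ} (ha : 0 < a) (y : ℝ) :
    Integrable (fun x : ℝ => (1 + (x^2 + y^2)/a) ^ (-(a+2)/2)) := by
  set b : ℝ := a + y^2 with hbdef
  have hb : 0 < b := by positivity
  set q : ℝ := 1 + y^2/a with hqdef
  have hq : 0 < q := by positivity
  have hsb : Real.sqrt b ≠ 0 := by positivity
  have hint : Integrable (fun x : ℝ =>
      q ^ (-(a+2)/2 : ℝ) * (1 + (x / Real.sqrt b)^2) ^ (-(a+2)/2)) :=
    ((bp_integrable' ha).comp_div hsb).const_mul _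
  apply hint.congr
  filter_upwards with x
  have h1 : (x / Real.sqrt b)^2 = x^2 / b := by
    rw [div_pow, Real.sq_sqrt hb.le]
  have h2 : 1 + (x^2 + y^2)/a = q * (1 + x^2/b) := by
    rw [hqdef, hbdef]; field_simp; ring
  rw [h1, h2, Real.mul_rpow hq.le (by positivity)]

theorem bailey_polar_student_t (a : ℝ) (ha : 0 < a) :
    ∃ c : ℝ, 0 < c ∧
      Measure.map
        (fun p : ℝ × ℝ =>
          Real.sqrt a * Real.sin (2 * π * p.2) * Real.sqrt (p.1 ^ (-2/a) - 1))
        ((volume.restrict (Icc (0:ℝ) 1)).prod (volume.restrict (Icc (0:ℝ) 1)))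
      = volume.withDensity
          (fun x : ℝ => ENNReal.ofReal (c * (1 + x^2 / a) ^ (-(a+1)/2))) := by
  have hπ : (0:ℝ) < π := Real.pi_pos
  set I : ℝ := ∫ t : ℝ, (1 + t^2) ^ (-(a+2)/2) with hIdef
  have hIpos : 0 < I := bp_I_pos' ha
  set c : ℝ := Real.sqrt a * I / (2*π) with hcdef
  refine ⟨c, by positivity, ?_⟩
  set f : ℝ × ℝ → ℝ := fun p =>
    Real.sqrt a * Real.sin (2 * π * p.2) * Real.sqrt (p.1 ^ (-2/a) - 1) with hfdef
  have hfPhi : ∀ p : ℝ × ℝ, f p = (bpPhi a p).2 := by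
    intro p; simp only [hfdef, bpPhi, bpS]; ring
  have hmf : Measurable f := by
    unfold f
    fun_prop
  have hsqm : MeasurableSet (Ioo (0:ℝ) 1 ×ˢ Ioo (0:ℝ) 1) :=
    measurableSet_Ioo.prod measurableSet_Ioo
  set sq : Set (ℝ × ℝ) := Ioo (0:ℝ) 1 ×ˢ Ioo (0:ℝ) 1 with hsqdef
  set D : ℝ × ℝ → ℝ≥0∞ := fun z =>
    ENNReal.ofReal ((2*π)⁻¹ * (1 + (z.1^2 + z.2^2)/a) ^ (-(a+2)/2)) with hDdef
  have hmD : Measurable D := by unfold D; fun_prop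
  ext s hs
  have hpre : f ⁻¹' s = bpPhi a ⁻¹' (Prod.snd ⁻¹' s) := by
    ext p
    simp only [mem_preimage]
    rw [hfPhi p]
  have hind : ∀ p, (f ⁻¹' s).indicator (1 : ℝ × ℝ → ℝ≥0∞) p
      = (Prod.snd ⁻¹' s).indicator 1 (bpPhi a p) := by
    intro p
    have hiff : p ∈ f ⁻¹' s ↔ bpPhi a p ∈ Prod.snd ⁻¹' s := by
      rw [hpre]; rfl
    by_cases h : p ∈ f ⁻¹' s
    · rw [indicator_of_mem h, indicator_of_mem (hiff.mp h)]; rfl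
    · rw [indicator_of_notMem h, indicator_of_notMem (fun hh => h (hiff.mpr hh))]
  -- change of variables
  have hCOV := MeasureTheory.lintegral_image_eq_lintegral_abs_det_fderiv_mul volume hsqm
    (fun p hp => (hasFDerivAt_bpPhi ha hp.1).hasFDerivWithinAt)
    (bpPhi_injOn ha) ((Prod.snd ⁻¹' s).indicator D)
  have hptwise : ∀ p ∈ sq,
      ENNReal.ofReal |(bpB a p).det| * ((Prod.snd ⁻¹' s).indicator D) (bpPhi a p)
        = (Prod.snd ⁻¹' s).indicator 1 (bpPhi a p) := by
    intro p hp
    have hu : p.1 ∈ Ioo (0:ℝ) 1 := hp.1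
    have hu1 : 0 < p.1 := hu.1
    have hdet : |(bpB a p).det| = (2*π) * p.1 ^ (-2/a - 1 : ℝ) := by
      rw [bpB_det ha hu,
        show -(2*π) * p.1 ^ (-2/a - 1 : ℝ) = -((2*π) * p.1 ^ (-2/a - 1 : ℝ)) by ring,
        abs_neg, abs_of_pos (mul_pos (by positivity) (Real.rpow_pos_of_pos hu1 _))]
    have hval : ENNReal.ofReal ((2*π) * p.1 ^ (-2/a - 1 : ℝ)) * D (bpPhi a p) = 1 := by
      unfold D
      rw [one_add_bpPhi_normSq ha hu]
      rw [show (p.1 ^ (-2/a : ℝ)) ^ (-(a+2)/2 : ℝ)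
          = p.1 ^ ((-2/a) * (-(a+2)/2) : ℝ) from (Real.rpow_mul hu1.le _ _).symm]
      rw [← ENNReal.ofReal_mul (by positivity)]
      have hre : (2*π) * p.1 ^ (-2/a - 1 : ℝ)
          * ((2*π)⁻¹ * p.1 ^ ((-2/a) * (-(a+2)/2) : ℝ)) = 1 := by
        have hkm : (-2/a - 1) + (-2/a) * (-(a+2)/2) = 0 := by field_simp; ring
        calc (2*π) * p.1 ^ (-2/a - 1 : ℝ)
              * ((2*π)⁻¹ * p.1 ^ ((-2/a) * (-(a+2)/2) : ℝ))
            = p.1 ^ (-2/a - 1 : ℝ) * p.1 ^ ((-2/a) * (-(a+2)/2) : ℝ)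
              * ((2*π) * (2*π)⁻¹) := by ring
          _ = p.1 ^ ((-2/a - 1) + (-2/a) * (-(a+2)/2) : ℝ) * 1 := by
              rw [← Real.rpow_add hu1, mul_inv_cancel₀ (by positivity : (2*π:ℝ) ≠ 0)]
          _ = 1 := by rw [hkm, Real.rpow_zero, mul_one]
      rw [hre, ENNReal.ofReal_one]
    by_cases h : bpPhi a p ∈ Prod.snd ⁻¹' s
    · rw [indicator_of_mem h, indicator_of_mem h, hdet, hval]
      rfl
    · rw [indicator_of_notMem h, indicator_of_notMem h, mul_zero]
  have himg : bpPhi a '' sq =ᵐ[volume] (univ : Set (ℝ × ℝ)) := by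
    rw [ae_eq_univ]
    have hsub : (bpPhi a '' sq)ᶜ ⊆ {z : ℝ × ℝ | z.2 = 0} := by
      intro z hz
      by_contra h
      simp only [mem_setOf_eq] at h
      exact hz (bpPhi_image ha (fun hc => h hc.1))
    refine measure_mono_null hsub ?_
    have hset : {z : ℝ × ℝ | z.2 = 0} = (univ : Set ℝ) ×ˢ ({0} : Set ℝ) := by
      ext z
      constructor
      · intro h; exact ⟨mem_univ _, by simpa using h⟩
      · intro h; simpa using h.2
    rw [hset, Measure.volume_eq_prod, Measure.prod_prod]
    simp
  have hinner : ∀ y : ℝ, (∫⁻ x : ℝ, ((Prod.snd ⁻¹' s).indicator D) (x, y))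
      = s.indicator (fun y => ENNReal.ofReal (c * (1 + y^2/a) ^ (-(a+1)/2))) y := by
    intro y
    by_cases hy : y ∈ s
    · rw [indicator_of_mem hy]
      have h1 : ∀ x : ℝ, ((Prod.snd ⁻¹' s).indicator D) (x, y) = D (x, y) := fun x =>
        indicator_of_mem (by simpa using hy) D
      rw [lintegral_congr h1]
      have h2 : (∫⁻ x : ℝ, D (x, y))
          = ENNReal.ofReal ((2*π)⁻¹ * ((Real.sqrt a * I) * (1 + y^2/a) ^ (-(a+1)/2))) := by
        unfold D
        rw [← ofReal_integral_eq_lintegral_ofReal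
          ((bp_inner_integrable ha y).const_mul _) ?_]
        · rw [MeasureTheory.integral_const_mul, bp_inner ha y]
        · filter_upwards with x
          have hpos : (0:ℝ) < 1 + (x^2 + y^2)/a := by
            have := div_nonneg (by positivity : (0:ℝ) ≤ x^2 + y^2) ha.le
            linarith
          positivity
      rw [h2]
      congr 1
      rw [hcdef]
      ring
    · rw [indicator_of_notMem hy]
      have h1 : ∀ x : ℝ, ((Prod.snd ⁻¹' s).indicator D) (x, y) = 0 := fun x =>
        indicator_of_notMem (by simpa using hy) D
      simp [h1]
  calc (Measure.map f ((volume.restrict (Icc (0:ℝ) 1)).prod (volume.restrict (Icc (0:ℝ) 1)))) s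
      = ((volume.restrict (Icc (0:ℝ) 1)).prod (volume.restrict (Icc (0:ℝ) 1))) (f ⁻¹' s) :=
        Measure.map_apply hmf hs
    _ = ((volume.prod volume).restrict sq) (f ⁻¹' s) := by
        rw [show (volume.restrict (Icc (0:ℝ) 1)) = volume.restrict (Ioo (0:ℝ) 1) from
          (Measure.restrict_congr_set Ioo_ae_eq_Icc).symm, Measure.prod_restrict]
    _ = ∫⁻ p, (f ⁻¹' s).indicator 1 p ∂((volume.prod volume).restrict sq) :=
        (lintegral_indicator_one (hmf hs)).symm
    _ = ∫⁻ p in sq, (Prod.snd ⁻¹' s).indicator 1 (bpPhi a p) ∂(volume.prod volume) := by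
        exact lintegral_congr fun p => hind p
    _ = ∫⁻ p in sq, ENNReal.ofReal |(bpB a p).det|
          * ((Prod.snd ⁻¹' s).indicator D) (bpPhi a p) ∂(volume.prod volume) := by
        refine (setLIntegral_congr_fun hsqm ?_).symm
        intro p hp
        exact hptwise p hp
    _ = ∫⁻ z in bpPhi a '' sq, ((Prod.snd ⁻¹' s).indicator D) z ∂(volume.prod volume) := by
        rw [← Measure.volume_eq_prod] at *
        exact hCOV.symm
    _ = ∫⁻ z, ((Prod.snd ⁻¹' s).indicator D) z ∂(volume.prod volume) := by
        rw [← Measure.volume_eq_prod, Measure.restrict_congr_set himg, Measure.restrict_univ]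
    _ = ∫⁻ y : ℝ, ∫⁻ x : ℝ, ((Prod.snd ⁻¹' s).indicator D) (x, y) :=
        lintegral_prod_symm _ (hmD.indicator (measurable_snd hs)).aemeasurable
    _ = ∫⁻ y : ℝ, s.indicator (fun y => ENNReal.ofReal (c * (1 + y^2/a) ^ (-(a+1)/2))) y :=
        lintegral_congr hinner
    _ = ∫⁻ y in s, ENNReal.ofReal (c * (1 + y^2/a) ^ (-(a+1)/2)) :=
        lintegral_indicator hs _
    _ = (volume.withDensity
          (fun x : ℝ => ENNReal.ofReal (c * (1 + x^2 / a) ^ (-(a+1)/2)))) s :=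
        (withDensity_apply _ hs).symm
end

section
/- If N is standard normal and G is an independent Gamma(a/2) random variable (rate 1), then N/√(G/(a/2)) has the Student-t distribution with parameter a, for any a > 0. -/
open Real MeasureTheory Set ProbabilityTheory
open scoped NNReal ENNReal

lemma lintegral_rpow_exp_aux {s b : ℝ} (hs : 0 < s) (hb : 0 < b) :
    ∫⁻ y in Ioi (0:ℝ), ENNReal.ofReal (y ^ (s-1) * Real.exp (-(b*y)))
      = ENNReal.ofReal (Real.Gamma s / b ^ s) := by
  have hG : 0 < Real.Gamma s := Real.Gamma_pos_of_pos hs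
  have hpos : 0 < b ^ s / Real.Gamma s := by positivity
  have h1 : ∫⁻ y in Ioi (0:ℝ), gammaPDF s b y = 1 := by
    have h0 : ∫⁻ y in Iic (0:ℝ), gammaPDF s b y = 0 := by
      rw [← MeasureTheory.restrict_Iio_eq_restrict_Iic,
        setLIntegral_congr_fun_ae measurableSet_Iio
          (ae_of_all _ fun y (hy : y < 0) => gammaPDF_of_neg hy), lintegral_zero]
    have h := lintegral_gammaPDF_eq_one hs hb
    rwa [← lintegral_add_compl (gammaPDF s b) measurableSet_Ioi, compl_Ioi, h0, add_zero] at h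
  have h2 : ∫⁻ y in Ioi (0:ℝ), gammaPDF s b y
      = ENNReal.ofReal (b ^ s / Real.Gamma s)
        * ∫⁻ y in Ioi (0:ℝ), ENNReal.ofReal (y ^ (s-1) * Real.exp (-(b*y))) := by
    rw [← lintegral_const_mul' _ _ ENNReal.ofReal_ne_top]
    refine setLIntegral_congr_fun_ae measurableSet_Ioi (ae_of_all _ fun y hy => ?_)
    rw [gammaPDF_of_nonneg (le_of_lt hy), ← ENNReal.ofReal_mul hpos.le, ← mul_assoc]
  have hk0 : ENNReal.ofReal (b ^ s / Real.Gamma s) ≠ 0 :=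
    (ENNReal.ofReal_pos.mpr hpos).ne'
  have hmul : ENNReal.ofReal (b ^ s / Real.Gamma s)
      * ∫⁻ y in Ioi (0:ℝ), ENNReal.ofReal (y ^ (s-1) * Real.exp (-(b*y))) = 1 :=
    h2.symm.trans h1
  calc ∫⁻ y in Ioi (0:ℝ), ENNReal.ofReal (y ^ (s-1) * Real.exp (-(b*y)))
      = (ENNReal.ofReal (b ^ s / Real.Gamma s))⁻¹
        * (ENNReal.ofReal (b ^ s / Real.Gamma s)
          * ∫⁻ y in Ioi (0:ℝ), ENNReal.ofReal (y ^ (s-1) * Real.exp (-(b*y)))) := by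
        rw [← mul_assoc, ENNReal.inv_mul_cancel hk0 ENNReal.ofReal_ne_top, one_mul]
    _ = (ENNReal.ofReal (b ^ s / Real.Gamma s))⁻¹ := by rw [hmul, mul_one]
    _ = ENNReal.ofReal (Real.Gamma s / b ^ s) := by
        rw [← ENNReal.ofReal_inv_of_pos hpos, inv_div]

theorem student_t_as_normal_over_gamma (a : ℝ) (ha : 0 < a) :
    Measure.map (fun p : ℝ × ℝ => p.1 / Real.sqrt (p.2 / (a/2)))
        ((gaussianReal 0 1).prod (gammaMeasure (a/2) 1))
      = volume.withDensity (fun x : ℝ => ENNReal.ofReal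
          ((Real.Gamma ((a+1)/2) / (Real.Gamma (a/2) * Real.Gamma (1/2) * Real.sqrt a))
            * (1 + x^2 / a) ^ (-(a+1)/2))) := by
  have ha2 : 0 < a/2 := by linarith
  haveI : IsProbabilityMeasure (gammaMeasure (a/2) 1) := isProbabilityMeasure_gammaMeasure ha2 one_pos
  set d : ℝ → ℝ → ℝ := fun y x => (Real.sqrt (π*a/y))⁻¹ * Real.exp (-(x^2*y/a)) with hd_def
  have hd_meas : Measurable (fun p : ℝ × ℝ => ENNReal.ofReal (d p.1 p.2)) := by
    apply Measurable.ennreal_ofReal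
    exact ((measurable_const.div measurable_fst).sqrt.inv).mul
      (((measurable_snd.pow measurable_const).mul measurable_fst).div_const a).neg.exp
  have hT : Measurable (fun p : ℝ × ℝ => p.1 / Real.sqrt (p.2 / (a/2))) :=
    measurable_fst.div (measurable_snd.div_const _).sqrt
  refine Measure.ext fun t ht => ?_
  rw [Measure.map_apply hT ht, Measure.prod_apply_symm (hT ht), withDensity_apply _ ht]
  -- step A: a.e. rewrite of the slice measure
  have hae : ∀ᵐ y ∂(gammaMeasure (a/2) 1), 0 < y := by
    rw [ae_iff]
    have hset : {y : ℝ | ¬ 0 < y} = Iic 0 := by ext y; simp [not_lt]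
    rw [hset, gammaMeasure, withDensity_apply _ measurableSet_Iic,
      ← MeasureTheory.restrict_Iio_eq_restrict_Iic,
      setLIntegral_congr_fun_ae measurableSet_Iio
        (ae_of_all _ fun y (hy : y < 0) => gammaPDF_of_neg hy), lintegral_zero]
  have hcong : ∀ᵐ y ∂(gammaMeasure (a/2) 1),
      (gaussianReal 0 1) ((fun x => (x, y)) ⁻¹' ((fun p : ℝ × ℝ => p.1 / Real.sqrt (p.2 / (a/2))) ⁻¹' t))
        = ∫⁻ x in t, ENNReal.ofReal (d y x) := by
    filter_upwards [hae] with y hy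
    set c := Real.sqrt (y/(a/2)) with hc_def
    have hcpos : 0 < c := Real.sqrt_pos.mpr (by positivity)
    have hcsq : c^2 = y/(a/2) := Real.sq_sqrt (by positivity)
    have hpre : ((fun x => (x, y)) ⁻¹' ((fun p : ℝ × ℝ => p.1 / Real.sqrt (p.2/(a/2))) ⁻¹' t))
        = (fun x : ℝ => c⁻¹ * x) ⁻¹' t := by
      ext x
      simp only [Set.mem_preimage]
      rw [div_eq_inv_mul]
    rw [hpre, ← Measure.map_apply (measurable_const_mul _) ht, gaussianReal_map_const_mul]
    have hv : (NNReal.mk (c⁻¹^2) (sq_nonneg _) * 1 : ℝ≥0) ≠ 0 := by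
      rw [mul_one]
      refine ne_of_gt ?_
      rw [← NNReal.coe_lt_coe]
      exact pow_pos (inv_pos.mpr hcpos) 2
    rw [mul_zero, gaussianReal_apply 0 hv t]
    refine setLIntegral_congr_fun_ae ht (ae_of_all _ fun x _ => ?_)
    show ENNReal.ofReal (gaussianPDFReal 0 _ x) = _
    congr 1
    rw [gaussianPDFReal]
    have hvcoe : ((NNReal.mk (c⁻¹^2) (sq_nonneg _) * 1 : ℝ≥0) : ℝ) = (a/2)/y := by
      rw [mul_one]
      show c⁻¹^2 = (a/2)/y
      rw [inv_pow, hcsq, inv_div]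
    rw [hvcoe]
    have hy0 : y ≠ 0 := hy.ne'
    have e1 : 2*π*((a/2)/y) = π*a/y := by ring
    have e2 : -(x-0)^2/(2*((a/2)/y)) = -(x^2*y/a) := by
      field_simp
      ring
    rw [e1, e2]
  rw [lintegral_congr_ae hcong]
  -- step B: unfold gamma measure, swap integrals
  have hF : Measurable (fun y => ∫⁻ x in t, ENNReal.ofReal (d y x)) :=
    Measurable.lintegral_prod_right hd_meas
  rw [gammaMeasure, lintegral_withDensity_eq_lintegral_mul _
    (show Measurable (gammaPDF (a/2) 1) from (measurable_gammaPDFReal _ _).ennreal_ofReal) hF]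
  rw [show (gammaPDF (a/2) 1 * fun y => ∫⁻ x in t, ENNReal.ofReal (d y x))
      = (fun y => gammaPDF (a/2) 1 y * ∫⁻ x in t, ENNReal.ofReal (d y x)) from rfl]
  have hzero : ∫⁻ y in Iic (0:ℝ),
      gammaPDF (a/2) 1 y * (∫⁻ x in t, ENNReal.ofReal (d y x)) = 0 := by
    rw [← MeasureTheory.restrict_Iio_eq_restrict_Iic,
      setLIntegral_congr_fun_ae measurableSet_Iio
        (ae_of_all _ fun y (hy : y < 0) => by
          rw [show gammaPDF (a/2) 1 y = 0 from gammaPDF_of_neg hy, zero_mul]),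
      lintegral_zero]
  rw [← lintegral_add_compl (fun y => gammaPDF (a/2) 1 y * (∫⁻ x in t, ENNReal.ofReal (d y x)))
    measurableSet_Ioi, compl_Ioi, hzero, add_zero]
  have hswap : ∫⁻ y in Ioi (0:ℝ), gammaPDF (a/2) 1 y * (∫⁻ x in t, ENNReal.ofReal (d y x))
      = ∫⁻ x in t, ∫⁻ y in Ioi (0:ℝ), gammaPDF (a/2) 1 y * ENNReal.ofReal (d y x) := by
    simp_rw [gammaPDF_eq, ← lintegral_const_mul' _ _ ENNReal.ofReal_ne_top]
    exact lintegral_lintegral_swap (((measurable_gammaPDFReal _ _).ennreal_ofReal.comp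
      measurable_fst).mul hd_meas).aemeasurable
  rw [hswap]
  -- step C: pointwise inner integral computation
  refine setLIntegral_congr_fun_ae ht (ae_of_all _ fun x _ => ?_)
  have hs : 0 < (a+1)/2 := by linarith
  have hb : 0 < 1 + x^2/a := by positivity
  have hGa : 0 < Real.Gamma (a/2) := Real.Gamma_pos_of_pos ha2
  have hsqpa : 0 < Real.sqrt (π*a) := Real.sqrt_pos.mpr (by positivity)
  have hK : 0 < 1/(Real.Gamma (a/2) * Real.sqrt (π*a)) := by positivity
  have hptwise : ∀ y ∈ Ioi (0:ℝ), gammaPDF (a/2) 1 y * ENNReal.ofReal (d y x)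
      = ENNReal.ofReal ((1/(Real.Gamma (a/2) * Real.sqrt (π*a)))
          * (y ^ ((a+1)/2 - 1) * Real.exp (-((1 + x^2/a)*y)))) := by
    intro y hy
    rw [mem_Ioi] at hy
    rw [gammaPDF_of_nonneg hy.le, ← ENNReal.ofReal_mul (by positivity)]
    congr 1
    have h1 : Real.sqrt (π*a/y) = Real.sqrt (π*a) / Real.sqrt y :=
      Real.sqrt_div (by positivity) y
    have h2 : Real.sqrt y = y ^ ((1:ℝ)/2) := Real.sqrt_eq_rpow y
    have h3 : y ^ (a/2-1) * y ^ ((1:ℝ)/2) = y ^ ((a+1)/2-1) := by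
      rw [← Real.rpow_add hy]
      congr 1
      ring
    have h4 : Real.exp (-(1*y)) * Real.exp (-(x^2*y/a)) = Real.exp (-((1 + x^2/a)*y)) := by
      rw [← Real.exp_add]
      congr 1
      field_simp
      ring
    show (1:ℝ) ^ (a/2) / Real.Gamma (a/2) * y ^ (a/2-1) * Real.exp (-(1*y))
        * ((Real.sqrt (π*a/y))⁻¹ * Real.exp (-(x^2*y/a))) = _
    rw [Real.one_rpow, h1, inv_div, ← h3, ← h4, ← h2]
    field_simp
  rw [setLIntegral_congr_fun_ae measurableSet_Ioi (ae_of_all _ hptwise)]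
  simp_rw [ENNReal.ofReal_mul hK.le]
  rw [lintegral_const_mul' _ _ ENNReal.ofReal_ne_top, lintegral_rpow_exp_aux hs hb,
    ← ENNReal.ofReal_mul hK.le]
  congr 1
  rw [Real.Gamma_one_half_eq]
  have hbneg : (1 + x^2/a) ^ (-(a+1)/2) = ((1 + x^2/a) ^ ((a+1)/2))⁻¹ := by
    rw [neg_div, Real.rpow_neg hb.le]
  have hsqrt : Real.sqrt π * Real.sqrt a = Real.sqrt (π*a) :=
    (Real.sqrt_mul pi_pos.le a).symm
  rw [hbneg, ← hsqrt]
  have hbs : 0 < (1 + x^2/a) ^ ((a+1)/2) := Real.rpow_pos_of_pos hb _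
  have hsqp : 0 < Real.sqrt π := Real.sqrt_pos.mpr pi_pos
  have hsqa : 0 < Real.sqrt a := Real.sqrt_pos.mpr ha
  simp only [one_div, div_eq_mul_inv, mul_inv]
  ring
end

section
/- Let h be a log-concave probability density on ℝ with mode m and let X be a random variable with density h. Then h(m)·√(Var X) ≥ 1/√12. -/
set_option maxHeartbeats 1000000
open Real MeasureTheory ProbabilityTheory Set

lemma integrable_exp_neg_abs' {c : ℝ} (hc : 0 < c) :
    Integrable fun x : ℝ => Real.exp (-c * |x|) := by
  have hI : IntegrableOn (fun x : ℝ => Real.exp (-c * |x|)) (Ici 0) := by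
    rw [integrableOn_Ici_iff_integrableOn_Ioi]
    refine (exp_neg_integrableOn_Ioi 0 hc).congr_fun ?_ measurableSet_Ioi
    intro x hx
    simp only [abs_of_nonneg (le_of_lt (mem_Ioi.mp hx))]
  rw [← integrableOn_univ, ← @Iio_union_Ici _ _ (0 : ℝ), integrableOn_union]
  refine ⟨?_, hI⟩
  rw [← (Measure.measurePreserving_neg (volume : Measure ℝ)).integrableOn_comp_preimage
      (Homeomorph.neg ℝ).measurableEmbedding]
  simp only [Function.comp_def, abs_neg, neg_preimage, neg_Iio, neg_zero]
  exact hI.mono_set Ioi_subset_Ici_self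

lemma sq_le_four_exp {u : ℝ} (hu : 0 ≤ u) : u ^ 2 ≤ 4 * Real.exp u := by
  have h1 := Real.add_one_le_exp (u / 2)
  have h2 : Real.exp u = Real.exp (u / 2) ^ 2 := by
    rw [← Real.exp_nat_mul]; ring_nf
  nlinarith [Real.exp_pos (u / 2)]

lemma decay_step {hm hx s : ℝ} (hmpos : 0 < hm) (hxnn : 0 ≤ hx) (hs : 0 < s) (hs1 : s ≤ 1)
    (H : hm ^ (1 - s) * hx ^ s ≤ hm / 2) : hx ≤ hm * (1 / 2 : ℝ) ^ (1 / s) := by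
  have hpow : (0:ℝ) < hm ^ (1 - s) := Real.rpow_pos_of_pos hmpos _
  have h1 : hx ^ s ≤ hm ^ s * (1 / 2) := by
    have hsplit : hm ^ (1 - s) * hm ^ s = hm := by
      rw [← Real.rpow_add hmpos]; norm_num
    have e : (hm / 2) / hm ^ (1-s) = hm ^ s * (1 / 2) := by
      have e0 : hm ^ s = hm / hm ^ (1 - s) := by
        rw [eq_div_iff hpow.ne', mul_comm]; exact hsplit
      rw [e0]; ring
    calc hx ^ s = (hm ^ (1 - s) * hx ^ s) / hm ^ (1-s) := by field_simp
      _ ≤ (hm / 2) / hm ^ (1-s) := by gcongr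
      _ = hm ^ s * (1 / 2) := e
  have h2 : (hx ^ s) ^ (1 / s) ≤ (hm ^ s * (1 / 2)) ^ (1 / s) :=
    Real.rpow_le_rpow (Real.rpow_nonneg hxnn _) h1 (by positivity)
  have e1 : (hx ^ s) ^ (1 / s) = hx := by
    rw [← Real.rpow_mul hxnn, mul_one_div, div_self hs.ne', Real.rpow_one]
  have e2 : (hm ^ s * (1 / 2) : ℝ) ^ (1 / s) = hm * (1 / 2 : ℝ) ^ (1 / s) := by
    rw [Real.mul_rpow (Real.rpow_nonneg hmpos.le _) (by norm_num),
      ← Real.rpow_mul hmpos.le, mul_one_div, div_self hs.ne', Real.rpow_one]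
  rwa [e1, e2] at h2

theorem fradelizi_lower_bound (h : ℝ → ℝ) (m : ℝ)
    (h_nonneg : ∀ x, 0 ≤ h x)
    (h_int : ∫ x : ℝ, h x = 1)
    (h_logconcave : ∀ x y : ℝ, ∀ t : ℝ, 0 ≤ t → t ≤ 1 →
      h x ^ t * h y ^ (1 - t) ≤ h (t * x + (1 - t) * y))
    (h_mode : ∀ x, h x ≤ h m) :
    let μ : Measure ℝ := volume.withDensity (fun x => ENNReal.ofReal (h x))
    1 / Real.sqrt 12 ≤ h m * Real.sqrt (variance id μ) := by
  intro μ
  have hInt : Integrable h := by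
    by_contra hc
    rw [integral_undef hc] at h_int; norm_num at h_int
  have hmpos : 0 < h m := by
    by_contra hc
    push_neg at hc
    have hz : ∀ x, h x = 0 := fun x => le_antisymm ((h_mode x).trans hc) (h_nonneg x)
    simp only [hz, integral_zero] at h_int; norm_num at h_int
  have hbex : ∃ b, m + 1 ≤ b ∧ h b ≤ h m / 2 := by
    by_contra hc
    push_neg at hc
    have hsub : Ici (m+1) ⊆ {x | h m / 2 ≤ h x} := fun x hx => (hc x hx).le
    have hlt := hInt.measure_ge_lt_top (by positivity : (0:ℝ) < h m / 2)
    have h2 : volume (Ici (m+1)) ≤ volume {x | h m / 2 ≤ h x} := measure_mono hsub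
    rw [volume_Ici] at h2
    exact absurd hlt (not_lt.mpr (le_trans le_top h2))
  have haex : ∃ a, a ≤ m - 1 ∧ h a ≤ h m / 2 := by
    by_contra hc
    push_neg at hc
    have hsub : Iic (m-1) ⊆ {x | h m / 2 ≤ h x} := fun x hx => (hc x hx).le
    have hlt := hInt.measure_ge_lt_top (by positivity : (0:ℝ) < h m / 2)
    have h2 : volume (Iic (m-1)) ≤ volume {x | h m / 2 ≤ h x} := measure_mono hsub
    rw [volume_Iic] at h2
    exact absurd hlt (not_lt.mpr (le_trans le_top h2))
  obtain ⟨b, hb1, hb2⟩ := hbex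
  obtain ⟨a, ha1, ha2⟩ := haex
  set R := max (b - m) (m - a) with hR
  have hbm : 1 ≤ b - m := by linarith
  have hma : 1 ≤ m - a := by linarith
  have hR1 : 1 ≤ R := le_trans hbm (le_max_left _ _)
  have hRpos : 0 < R := by linarith
  set lam := Real.log 2 / R with hlam
  have hl2 : 0 < Real.log 2 := Real.log_pos (by norm_num)
  have hlampos : 0 < lam := div_pos hl2 hRpos
  have hdecay : ∀ x, h x ≤ 2 * h m * Real.exp (-lam * |x - m|) := by
    intro x
    rcases le_or_gt x b with hxb | hbx
    · rcases le_or_gt a x with hax | hxa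
      · -- middle
        have habs : |x - m| ≤ R := by
          rw [abs_le]; constructor
          · have := le_max_right (b-m) (m-a); linarith
          · have := le_max_left (b-m) (m-a); linarith
        have hlamR : lam * R = Real.log 2 := div_mul_cancel₀ _ hRpos.ne'
        have hexp2 : Real.exp (-Real.log 2) ≤ Real.exp (-lam * |x-m|) := by
          apply Real.exp_le_exp.2
          have := mul_le_mul_of_nonneg_left habs hlampos.le
          nlinarith
        rw [Real.exp_neg, Real.exp_log (by norm_num : (0:ℝ) < 2)] at hexp2
        nlinarith [h_mode x]
      · -- left tail : x < a
        have hmx : 0 < m - x := by linarith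
        have hampos : 0 < m - a := by linarith
        set s := (m - a) / (m - x) with hs
        have hs0 : 0 < s := div_pos hampos hmx
        have hs1 : s ≤ 1 := by rw [hs, div_le_one hmx]; linarith
        have hlc := h_logconcave x m s (by linarith) (by linarith)
        have hpt : s * x + (1 - s) * m = a := by
          rw [hs]; field_simp; ring
        rw [hpt, mul_comm] at hlc
        have hstep := decay_step hmpos (h_nonneg x) hs0 hs1 (hlc.trans ha2)
        have h1s : 1 / s = (m - x)/(m - a) := by rw [hs, one_div_div]
        have hrp : ((1:ℝ)/2) ^ (1/s) = Real.exp (-(Real.log 2) * ((m-x)/(m-a))) := by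
          rw [Real.rpow_def_of_pos (by norm_num), h1s]
          rw [one_div, Real.log_inv, neg_mul]
        have hlamle : lam ≤ Real.log 2 / (m - a) := by
          rw [hlam]; gcongr
          exact le_max_right _ _
        have hexple : Real.exp (-(Real.log 2) * ((m-x)/(m-a))) ≤ Real.exp (-lam * (m - x)) := by
          apply Real.exp_le_exp.2
          have h3 := mul_le_mul_of_nonneg_right hlamle hmx.le
          calc -(Real.log 2) * ((m-x)/(m-a)) = -((Real.log 2/(m-a)) * (m-x)) := by ring
            _ ≤ -(lam * (m - x)) := by linarith
            _ = -lam * (m - x) := by ring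
        have habsx : |x - m| = m - x := by rw [abs_sub_comm, abs_of_pos hmx]
        rw [habsx]
        calc h x ≤ h m * Real.exp (-(Real.log 2) * ((m-x)/(m-a))) := by rw [← hrp]; exact hstep
          _ ≤ h m * Real.exp (-lam * (m-x)) := mul_le_mul_of_nonneg_left hexple hmpos.le
          _ ≤ 2 * h m * Real.exp (-lam * (m-x)) := by nlinarith [Real.exp_pos (-lam * (m-x))]
    · -- right tail : b < x
      have hmx : 0 < x - m := by linarith
      have hbmpos : 0 < b - m := by linarith
      set s := (b - m) / (x - m) with hs
      have hs0 : 0 < s := div_pos hbmpos hmx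
      have hs1 : s ≤ 1 := by rw [hs, div_le_one hmx]; linarith
      have hlc := h_logconcave m x (1 - s) (by linarith) (by linarith)
      have hpt : (1 - s) * m + (1 - (1 - s)) * x = b := by
        rw [sub_sub_cancel, hs]; field_simp; ring
      rw [hpt, sub_sub_cancel] at hlc
      have hstep := decay_step hmpos (h_nonneg x) hs0 hs1 (hlc.trans hb2)
      have h1s : 1 / s = (x - m)/(b - m) := by rw [hs, one_div_div]
      have hrp : ((1:ℝ)/2) ^ (1/s) = Real.exp (-(Real.log 2) * ((x-m)/(b-m))) := by
        rw [Real.rpow_def_of_pos (by norm_num), h1s]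
        rw [one_div, Real.log_inv, neg_mul]
      have hlamle : lam ≤ Real.log 2 / (b - m) := by
        rw [hlam]; gcongr
        exact le_max_left _ _
      have hexple : Real.exp (-(Real.log 2) * ((x-m)/(b-m))) ≤ Real.exp (-lam * (x - m)) := by
        apply Real.exp_le_exp.2
        have h3 := mul_le_mul_of_nonneg_right hlamle hmx.le
        calc -(Real.log 2) * ((x-m)/(b-m)) = -((Real.log 2/(b-m)) * (x-m)) := by ring
          _ ≤ -(lam * (x - m)) := by linarith
          _ = -lam * (x - m) := by ring
      have habsx : |x - m| = x - m := abs_of_pos hmx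
      rw [habsx]
      calc h x ≤ h m * Real.exp (-(Real.log 2) * ((x-m)/(b-m))) := by rw [← hrp]; exact hstep
        _ ≤ h m * Real.exp (-lam * (x-m)) := mul_le_mul_of_nonneg_left hexple hmpos.le
        _ ≤ 2 * h m * Real.exp (-lam * (x-m)) := by nlinarith [Real.exp_pos (-lam * (x-m))]
  -- second moment bound
  set C := 32 * h m * Real.exp (lam * |m|) / lam ^ 2 with hC
  have hkey : ∀ x, x ^ 2 * h x ≤ C * Real.exp (-(lam/2) * |x|) := by
    intro x
    have h1 := hdecay x
    have h2 : Real.exp (-lam * |x - m|) ≤ Real.exp (lam * |m|) * Real.exp (-lam * |x|) := by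
      rw [← Real.exp_add]
      apply Real.exp_le_exp.2
      have h3 : |x| - |m| ≤ |x - m| := abs_sub_abs_le_abs_sub x m
      nlinarith
    have h3 : x ^ 2 ≤ 16 / lam ^ 2 * Real.exp (lam/2 * |x|) := by
      have h4 := sq_le_four_exp (u := lam/2 * |x|) (by positivity)
      have h5 : (lam/2 * |x|) ^ 2 = lam^2/4 * x^2 := by rw [mul_pow, sq_abs]; ring
      rw [h5] at h4
      rw [div_mul_eq_mul_div, le_div_iff₀ (by positivity)]
      nlinarith
    have e : Real.exp (lam/2 * |x|) * Real.exp (-lam * |x|) = Real.exp (-(lam/2) * |x|) := by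
      rw [← Real.exp_add]; congr 1; ring
    calc x ^ 2 * h x
        ≤ x ^ 2 * (2 * h m * (Real.exp (lam * |m|) * Real.exp (-lam * |x|))) := by
          apply mul_le_mul_of_nonneg_left _ (sq_nonneg x)
          calc h x ≤ 2 * h m * Real.exp (-lam * |x - m|) := h1
            _ ≤ 2 * h m * (Real.exp (lam * |m|) * Real.exp (-lam * |x|)) := by
                apply mul_le_mul_of_nonneg_left h2 (by linarith)
      _ ≤ (16 / lam ^ 2 * Real.exp (lam/2 * |x|)) *
            (2 * h m * (Real.exp (lam * |m|) * Real.exp (-lam * |x|))) := by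
          exact mul_le_mul_of_nonneg_right h3
            (mul_nonneg (by linarith) (by positivity))
      _ = 32 * h m * Real.exp (lam * |m|) / lam^2 *
            (Real.exp (lam/2 * |x|) * Real.exp (-lam * |x|)) := by ring
      _ = C * Real.exp (-(lam/2) * |x|) := by rw [e, hC]
  have hx2 : Integrable (fun x => x^2 * h x) := by
    apply Integrable.mono' ((integrable_exp_neg_abs' (by positivity : (0:ℝ) < lam/2)).const_mul C)
    · exact (continuous_pow 2).aestronglyMeasurable.mul hInt.aestronglyMeasurable
    · filter_upwards with x
      rw [Real.norm_eq_abs, abs_of_nonneg (mul_nonneg (sq_nonneg _) (h_nonneg x))]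
      exact hkey x
  have hx1 : Integrable (fun x => x * h x) := by
    apply Integrable.mono' (hInt.add hx2)
    · exact continuous_id.aestronglyMeasurable.mul hInt.aestronglyMeasurable
    · filter_upwards with x
      rw [Real.norm_eq_abs, abs_mul, abs_of_nonneg (h_nonneg x)]
      have h5 : |x| ≤ 1 + x^2 := by nlinarith [sq_nonneg (|x|-1), sq_abs x]
      calc |x| * h x ≤ (1 + x^2) * h x := mul_le_mul_of_nonneg_right h5 (h_nonneg x)
        _ = h x + x^2 * h x := by ring

  -- the measure μ is a probability measure
  haveI hprob : IsProbabilityMeasure μ := by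
    constructor
    show (volume.withDensity fun x => ENNReal.ofReal (h x)) univ = 1
    rw [withDensity_apply _ MeasurableSet.univ, Measure.restrict_univ,
      ← ofReal_integral_eq_lintegral_ofReal hInt (ae_of_all _ h_nonneg), h_int,
      ENNReal.ofReal_one]
  have hAEM : AEMeasurable (fun x => Real.toNNReal (h x)) volume :=
    measurable_real_toNNReal.comp_aemeasurable hInt.aemeasurable
  have hμeq : μ = volume.withDensity (fun x => (Real.toNNReal (h x) : ENNReal)) := rfl
  have hmem2 : MemLp (id : ℝ → ℝ) 2 μ := by
    rw [memLp_two_iff_integrable_sq aestronglyMeasurable_id]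
    rw [hμeq, integrable_withDensity_iff_integrable_smul₀ hAEM]
    refine hx2.congr (ae_of_all _ fun x => ?_)
    show x^2 * h x = Real.toNNReal (h x) • (id x)^2
    rw [NNReal.smul_def, Real.coe_toNNReal _ (h_nonneg x), id_eq, smul_eq_mul, mul_comm]
  set c := ∫ x, id x ∂μ with hc
  have hvar : variance id μ = ∫ x, (x - c)^2 ∂μ := by
    rw [variance_eq_integral measurable_id.aemeasurable]
    rfl
  have hvar2 : variance id μ = ∫ x, h x * (x - c)^2 := by
    rw [hvar, hμeq, integral_withDensity_eq_integral_smul₀ hAEM]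
    refine integral_congr_ae (ae_of_all _ fun x => ?_)
    show Real.toNNReal (h x) • (x - c)^2 = h x * (x - c)^2
    rw [NNReal.smul_def, Real.coe_toNNReal _ (h_nonneg x), smul_eq_mul]
  have I1 : Integrable (fun x => h x * (x - c)^2) := by
    have e : (fun x => h x * (x - c)^2)
        = fun x => x^2 * h x - (2*c) * (x * h x) + c^2 * h x := funext fun x => by ring
    rw [e]
    exact (hx2.sub (hx1.const_mul (2*c))).add (hInt.const_mul (c^2))
  -- bathtub argument
  set M := h m with hM
  set av := 1/(2*M) with hav
  have havpos : 0 < av := by rw [hav]; positivity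
  set φ : ℝ → ℝ := (Icc (c - av) (c + av)).indicator (fun _ => M) with hφ
  have hφint : Integrable φ := by
    rw [hφ, integrable_indicator_iff measurableSet_Icc]
    exact integrableOn_const (by rw [Real.volume_Icc]; exact ENNReal.ofReal_ne_top)
  have hind : Integrable ((Icc (c - av) (c + av)).indicator (fun x => (x - c)^2 * M)) := by
    rw [integrable_indicator_iff measurableSet_Icc]
    exact (((continuous_id.sub continuous_const).pow 2).mul continuous_const).integrableOn_Icc
  have hps : ∀ x, (x - c)^2 * φ x = (Icc (c - av) (c + av)).indicator (fun x => (x - c)^2 * M) x := by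
    intro x
    rw [hφ]
    by_cases hx : x ∈ Icc (c - av) (c + av) <;> simp [Set.indicator_apply, hx]
  have hsub0 : Integrable (fun x => h x - φ x) := hInt.sub hφint
  have hsubint : Integrable (fun x => av ^ 2 * (h x - φ x)) := hsub0.const_mul _
  set ψ : ℝ → ℝ := fun x => (x - c)^2 * φ x + av^2 * (h x - φ x) with hψ
  have hψint : Integrable ψ := by
    rw [hψ]
    exact (hind.congr (ae_of_all _ fun x => (hps x).symm)).add hsubint
  have hpoint : ∀ x, ψ x ≤ h x * (x - c)^2 := by
    intro x
    show (x - c)^2 * φ x + av^2 * (h x - φ x) ≤ h x * (x - c)^2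
    by_cases hx : x ∈ Icc (c - av) (c + av)
    · rw [hφ, Set.indicator_of_mem hx]
      obtain ⟨hx1', hx2'⟩ := hx
      have h1 : (x - c)^2 ≤ av^2 := by nlinarith
      nlinarith [mul_nonneg (sub_nonneg.2 h1) (sub_nonneg.2 (h_mode x))]
    · rw [hφ, Set.indicator_of_notMem hx]
      have h1 : av^2 ≤ (x - c)^2 := by
        rcases not_and_or.1 ((Set.mem_Icc).not.1 hx) with h' | h' <;> push_neg at h' <;> nlinarith
      nlinarith [mul_nonneg (h_nonneg x) (sub_nonneg.2 h1)]
  have hmono := integral_mono hψint I1 hpoint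
  have hφI : ∫ x, φ x = M * (2 * av) := by
    rw [hφ, integral_indicator_const _ measurableSet_Icc, measureReal_def, Real.volume_Icc]
    rw [show c + av - (c - av) = 2 * av by ring, ENNReal.toReal_ofReal (by positivity)]
    simp [mul_comm]
  have hindI : ∫ x, (Icc (c - av) (c + av)).indicator (fun x => (x - c)^2 * M) x
      = M * (2/3 * av^3) := by
    rw [integral_indicator measurableSet_Icc, integral_Icc_eq_integral_Ioc,
      ← intervalIntegral.integral_of_le (by linarith)]
    rw [intervalIntegral.integral_mul_const]
    rw [intervalIntegral.integral_comp_sub_right (fun u : ℝ => u^2) c]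
    rw [show c - av - c = -av by ring, show c + av - c = av by ring]
    rw [integral_pow]
    ring
  have hψI : ∫ x, ψ x = 1 / (12 * M^2) := by
    have e1 : ∫ x, ψ x = (∫ x, (x - c)^2 * φ x) + av^2 * ((∫ x, h x) - ∫ x, φ x) := by
      simp only [hψ]
      rw [integral_add (hind.congr (ae_of_all _ fun x => (hps x).symm))
        hsubint, MeasureTheory.integral_const_mul, integral_sub hInt hφint]
    have e2 : ∫ x, (x - c)^2 * φ x = M * (2/3 * av^3) := by
      rw [show (fun x => (x - c)^2 * φ x)
        = fun x => (Icc (c - av) (c + av)).indicator (fun x => (x - c)^2 * M) x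
        from funext hps]
      exact hindI
    rw [e1, e2, h_int, hφI, hav]
    have hMne : M ≠ 0 := ne_of_gt hmpos
    field_simp
    ring
  have hvarge : 1/(12*M^2) ≤ variance id μ := by
    rw [hvar2, ← hψI]
    exact hmono
  -- conclusion
  have e1 : M * Real.sqrt (variance id μ) = Real.sqrt (M^2 * variance id μ) := by
    rw [Real.sqrt_mul (sq_nonneg M), Real.sqrt_sq hmpos.le]
  have e2 : 1/Real.sqrt 12 = Real.sqrt (1/12) := by
    rw [one_div, one_div, Real.sqrt_inv]
  rw [e1, e2]
  apply Real.sqrt_le_sqrt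
  have h6 := mul_le_mul_of_nonneg_left hvarge (sq_nonneg M)
  calc (1:ℝ)/12 = M^2 * (1/(12*M^2)) := by field_simp
    _ ≤ M^2 * variance id μ := h6
end

section
/- Every log-concave probability density h on ℝ with mode at m satisfies h(x) ≤ h(m)·min(1, exp(1 − h(m)·|x − m|)) for all x ∈ ℝ. -/
open Real MeasureTheory

lemma devroye_half (h : ℝ → ℝ) (m : ℝ)
    (h_nonneg : ∀ x, 0 ≤ h x)
    (h_int : ∫ x : ℝ, h x = 1)
    (h_logconcave : ∀ x y : ℝ, ∀ t : ℝ, 0 ≤ t → t ≤ 1 →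
      h x ^ t * h y ^ (1 - t) ≤ h (t * x + (1 - t) * y))
    (h_mode : ∀ x, h x ≤ h m) :
    ∀ x : ℝ, m ≤ x → h x ≤ h m * Real.exp (1 - h m * (x - m)) := by
  intro x hmx
  set M := h m with hM
  have h_integrable : Integrable h volume := by
    by_contra hni
    rw [integral_undef hni] at h_int
    norm_num at h_int
  have hM0 : 0 < M := by
    rcases lt_or_ge 0 M with h1 | h1
    · exact h1
    · exfalso
      have hz : ∀ y, h y = 0 := fun y =>
        le_antisymm (le_trans (h_mode y) h1) (h_nonneg y)
      have : (∫ y : ℝ, h y) = 0 := by simp [hz]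
      rw [this] at h_int; norm_num at h_int
  rcases le_or_gt (M * (x - m)) 1 with hsmall | hbig
  · calc h x ≤ M := h_mode x
      _ ≤ M * Real.exp (1 - M * (x - m)) :=
        le_mul_of_one_le_right hM0.le (Real.one_le_exp (by linarith))
  -- now M * (x - m) > 1, so x > m
  have hxm : 0 < x - m := by
    rcases lt_or_ge m x with h1 | h1
    · linarith
    · exfalso
      have : x - m ≤ 0 := by linarith
      nlinarith
  have hsetle : ∫ u in Set.Icc m x, h u ≤ 1 := by
    rw [← h_int]
    exact setIntegral_le_integral h_integrable (Filter.Eventually.of_forall h_nonneg)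
  rcases eq_or_lt_of_le (h_nonneg x) with hx0 | hx0
  · rw [← hx0]; positivity
  rcases eq_or_lt_of_le (h_mode x) with hxM | hxM
  · -- h x = M : show M * (x - m) ≤ 1, contradiction with hbig
    exfalso
    have hpoint : ∀ u ∈ Set.Icc m x, M ≤ h u := by
      intro u hu
      obtain ⟨hu1, hu2⟩ := hu
      set t := (u - m) / (x - m) with ht
      have ht0 : 0 ≤ t := div_nonneg (by linarith) hxm.le
      have ht1 : t ≤ 1 := by rw [div_le_one hxm]; linarith
      have hkey := h_logconcave x m t ht0 ht1
      have heq : t * x + (1 - t) * m = u := by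
        field_simp [ht]
        rw [ht]; linear_combination div_mul_cancel₀ (u - m) hxm.ne'
      rw [heq] at hkey
      calc M = M ^ t * M ^ (1 - t) := by
              rw [← Real.rpow_add hM0]; norm_num
        _ = h x ^ t * h m ^ (1 - t) := by rw [hxM, ← hM]
        _ ≤ h u := hkey
    have hmono : ∫ u in Set.Icc m x, M ≤ ∫ u in Set.Icc m x, h u :=
      setIntegral_mono_on (integrableOn_const (by
        rw [Real.volume_Icc]; exact ENNReal.ofReal_ne_top))
        h_integrable.integrableOn measurableSet_Icc hpoint
    rw [setIntegral_const, Real.volume_real_Icc_of_le hmx,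
      smul_eq_mul] at hmono
    nlinarith
  -- main case: 0 < h x < M
  set s := Real.log (M / h x) with hs
  have hs0 : 0 < s := Real.log_pos ((one_lt_div hx0).mpr hxM)
  have hhx : h x = M * Real.exp (-s) := by
    rw [hs, ← Real.log_inv, Real.exp_log (by positivity)]
    field_simp
  set c := s / (x - m) with hc
  have hc0 : 0 < c := div_pos hs0 hxm
  have hpoint : ∀ u ∈ Set.Icc m x, M * Real.exp (-c * (u - m)) ≤ h u := by
    intro u hu
    obtain ⟨hu1, hu2⟩ := hu
    set t := (u - m) / (x - m) with ht
    have ht0 : 0 ≤ t := div_nonneg (by linarith) hxm.le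
    have ht1 : t ≤ 1 := by rw [div_le_one hxm]; linarith
    have hkey := h_logconcave x m t ht0 ht1
    have heq : t * x + (1 - t) * m = u := by
      field_simp [ht]
      rw [ht]; linear_combination div_mul_cancel₀ (u - m) hxm.ne'
    rw [heq] at hkey
    have e1 : h x ^ t * h m ^ (1 - t) = (M ^ t * M ^ (1 - t)) * Real.exp (-s * t) := by
      rw [hhx, Real.mul_rpow hM0.le (Real.exp_nonneg _), ← Real.exp_mul, ← hM]
      ring
    have e2 : M ^ t * M ^ (1 - t) = M := by
      rw [← Real.rpow_add hM0]; norm_num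
    have e3 : -c * (u - m) = -s * t := by
      rw [hc, ht]; field_simp
    calc M * Real.exp (-c * (u - m)) = h x ^ t * h m ^ (1 - t) := by
          rw [e1, e2, e3]
      _ ≤ h u := hkey
  have hmono : ∫ u in Set.Icc m x, M * Real.exp (-c * (u - m)) ≤ ∫ u in Set.Icc m x, h u :=
    setIntegral_mono_on
      ((Continuous.integrableOn_Icc (by fun_prop)))
      h_integrable.integrableOn measurableSet_Icc hpoint
  have hderiv : ∀ u ∈ Set.uIcc m x,
      HasDerivAt (fun u => -(M / c) * Real.exp (-c * (u - m)))
        (M * Real.exp (-c * (u - m))) u := by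
    intro u _
    have h1 : HasDerivAt (fun u : ℝ => -c * (u - m)) (-c) u := by
      simpa using ((hasDerivAt_id u).sub_const m).const_mul (-c)
    have h2 := (h1.exp).const_mul (-(M / c))
    refine h2.congr_deriv ?_
    rw [mul_comm (Real.exp _) (-c), ← mul_assoc, neg_mul_neg, div_mul_cancel₀ M hc0.ne']
  have hIc : IntervalIntegrable (fun u => M * Real.exp (-c * (u - m))) volume m x :=
    Continuous.intervalIntegrable (by fun_prop) m x
  have hval : ∫ u in m..x, M * Real.exp (-c * (u - m))
      = -(M / c) * Real.exp (-c * (x - m)) - -(M / c) * Real.exp (-c * (m - m)) :=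
    intervalIntegral.integral_eq_sub_of_hasDerivAt hderiv hIc
  have hcx : c * (x - m) = s := by rw [hc]; field_simp
  have hval2 : ∫ u in m..x, M * Real.exp (-c * (u - m))
      = (M / c) * (1 - Real.exp (-s)) := by
    rw [hval]
    have : -c * (x - m) = -s := by rw [neg_mul, hcx]
    rw [this]
    have hmm : -c * (m - m) = 0 := by ring
    rw [hmm, Real.exp_zero]
    ring
  have hIccval : ∫ u in Set.Icc m x, M * Real.exp (-c * (u - m))
      = (M / c) * (1 - Real.exp (-s)) := by
    rw [MeasureTheory.integral_Icc_eq_integral_Ioc,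
      ← intervalIntegral.integral_of_le hmx, hval2]
  have hkey1 : (M / c) * (1 - Real.exp (-s)) ≤ 1 := by
    rw [← hIccval]; exact le_trans hmono hsetle
  -- arithmetic finish
  set E := Real.exp (-s) with hE
  have hE0 : 0 < E := Real.exp_pos _
  have hE1 : E * (1 + s) ≤ 1 := by
    have h1 : s + 1 ≤ Real.exp s := Real.add_one_le_exp s
    have h2 : E * Real.exp s = 1 := by
      rw [hE, ← Real.exp_add]; simp
    nlinarith
  have hMc : M / c = M * (x - m) / s := by
    rw [hc]; field_simp
  have hA : M * (x - m) * (1 - E) ≤ s := by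
    rw [hMc] at hkey1
    have h2 : M * (x - m) * (1 - E) / s ≤ 1 := by
      calc M * (x - m) * (1 - E) / s = M * (x - m) / s * (1 - E) := by ring
        _ ≤ 1 := hkey1
    calc M * (x - m) * (1 - E) = M * (x - m) * (1 - E) / s * s := by field_simp
      _ ≤ 1 * s := mul_le_mul_of_nonneg_right h2 hs0.le
      _ = s := one_mul s
  have hfin : M * (x - m) ≤ 1 + s := by
    nlinarith [mul_pos hM0 hxm, hE0]
  rw [hhx]
  have : Real.exp (-s) ≤ Real.exp (1 - M * (x - m)) :=
    Real.exp_le_exp.mpr (by linarith)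
  nlinarith

theorem devroye_logconcave_bound (h : ℝ → ℝ) (m : ℝ)
    (h_nonneg : ∀ x, 0 ≤ h x)
    (h_int : ∫ x : ℝ, h x = 1)
    (h_logconcave : ∀ x y : ℝ, ∀ t : ℝ, 0 ≤ t → t ≤ 1 →
      h x ^ t * h y ^ (1 - t) ≤ h (t * x + (1 - t) * y))
    (h_mode : ∀ x, h x ≤ h m) :
    ∀ x : ℝ, h x ≤ h m * min 1 (Real.exp (1 - h m * |x - m|)) := by
  intro x
  have key : h x ≤ h m * Real.exp (1 - h m * |x - m|) := by
    rcases le_or_gt m x with hmx | hmx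
    · rw [abs_of_nonneg (by linarith)]
      exact devroye_half h m h_nonneg h_int h_logconcave h_mode x hmx
    · set g : ℝ → ℝ := fun y => h (2 * m - y) with hg
      have g_nonneg : ∀ y, 0 ≤ g y := fun y => h_nonneg _
      have g_int : ∫ y : ℝ, g y = 1 := by
        rw [hg]
        simpa using (MeasureTheory.integral_sub_left_eq_self h volume (2 * m)).trans h_int
      have g_lc : ∀ a b : ℝ, ∀ t : ℝ, 0 ≤ t → t ≤ 1 →
          g a ^ t * g b ^ (1 - t) ≤ g (t * a + (1 - t) * b) := by
        intro a b t ht0 ht1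
        have hkey := h_logconcave (2 * m - a) (2 * m - b) t ht0 ht1
        have heq : t * (2 * m - a) + (1 - t) * (2 * m - b)
            = 2 * m - (t * a + (1 - t) * b) := by ring
        rw [heq] at hkey
        simpa [hg] using hkey
      have g_mode : ∀ y, g y ≤ g m := by
        intro y
        have : g m = h m := by simp [hg]; congr 1; ring
        rw [this]
        exact h_mode _
      have hgm : g m = h m := by simp [hg]; congr 1; ring
      have hb := devroye_half g m g_nonneg g_int g_lc g_mode (2 * m - x) (by linarith)
      have h1 : g (2 * m - x) = h x := by simp [hg]
      have h2 : (2 * m - x) - m = m - x := by ring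
      rw [h1, hgm, h2] at hb
      rw [abs_sub_comm, abs_of_nonneg (by linarith : (0:ℝ) ≤ m - x)]
      exact hb
  have key2 : h x ≤ h m * 1 := by rw [mul_one]; exact h_mode x
  rcases le_total (1 : ℝ) (Real.exp (1 - h m * |x - m|)) with hc | hc
  · rwa [min_eq_left hc]
  · rwa [min_eq_right hc]
end

section
/- For all x > 0, √(2e)·((x+1/2)/e)^{x+1/2} ≤ Γ(1+x) ≤ √(2π)·((x+1/2)/e)^{x+1/2}. -/
open Real Set Filter Topology

namespace BatirAux

noncomputable def f : ℝ → ℝ := Real.log ∘ Real.Gamma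

lemma hder {x : ℝ} (hx : 0 < x) : DifferentiableAt ℝ f x := by
  refine (Real.differentiableAt_Gamma ?_).log (Real.Gamma_ne_zero ?_) <;>
    exact fun m => ((neg_nonpos.mpr m.cast_nonneg).trans_lt hx).ne'

lemma h_rec (x : ℝ) (hx : 0 < x) : f (x + 1) = f x + Real.log x := by
  simp only [f, Function.comp_apply, Real.Gamma_add_one hx.ne',
    Real.log_mul hx.ne' (Real.Gamma_pos_of_pos hx).ne', add_comm]

lemma hder_rec (x : ℝ) (hx : 0 < x) : deriv f (x + 1) = deriv f x + 1 / x := by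
  rw [← deriv_comp_add_const, one_div, ← Real.deriv_log,
    ← deriv_add (hder hx) (Real.differentiableAt_log hx.ne')]
  apply Filter.EventuallyEq.deriv_eq
  filter_upwards [eventually_gt_nhds hx] using h_rec

lemma hder_sum (x : ℝ) (hx : 0 < x) (n : ℕ) :
    deriv f (x + n) = deriv f x + ∑ k ∈ Finset.range n, 1 / (x + k) := by
  induction n with
  | zero => simp
  | succ n ih =>
    have hxn : 0 < x + n := by positivity
    have : x + (n + 1 : ℕ) = (x + n) + 1 := by push_cast; ring
    rw [this, hder_rec _ hxn, ih, Finset.sum_range_succ, add_assoc]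

lemma slopeLB (y : ℝ) (hy : 0 < y) : Real.log y ≤ deriv f (y + 1) := by
  have hc : ConvexOn ℝ (Ioi 0) f := Real.convexOn_log_Gamma
  refine (le_of_eq ?_).trans <| hc.slope_le_deriv (mem_Ioi.mpr hy)
    (mem_Ioi.mpr (by linarith)) (by linarith) (hder (by linarith))
  rw [slope_def_field, h_rec y hy]
  field_simp
  ring

lemma log_two_s (s : ℝ) (hs : s ∈ Icc (0:ℝ) (1/2)) :
    2 * s ≤ Real.log (1 + s) - Real.log (1 - s) := by
  set Q : ℝ → ℝ := fun t => Real.log (1 + t) - Real.log (1 - t) - 2 * t with hQ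
  have hQder : ∀ t ∈ Ioo (0:ℝ) (1/2), HasDerivAt Q (1/(1+t) + 1/(1-t) - 2) t := by
    intro t ht
    have h1 : (1 : ℝ) + t ≠ 0 := by nlinarith [ht.1]
    have h2 : (1 : ℝ) - t ≠ 0 := by nlinarith [ht.2]
    have d1 : HasDerivAt (fun t : ℝ => Real.log (1 + t)) (1/(1+t)) t := by
      simpa using (((hasDerivAt_id t).const_add 1).log h1)
    have d2 : HasDerivAt (fun t : ℝ => Real.log (1 - t)) (-(1/(1-t))) t := by
      have : HasDerivAt (fun t : ℝ => (1 - t)) (-1) t := by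
        simpa using ((hasDerivAt_id t).const_sub 1)
      have := this.log h2
      convert this using 1
      field_simp
    have d3 : HasDerivAt (fun t : ℝ => 2 * t) 2 t := by
      simpa using (hasDerivAt_id t).const_mul 2
    have := (d1.sub d2).sub d3
    exact this.congr_deriv (by ring)
  have hmono : MonotoneOn Q (Icc (0:ℝ) (1/2)) := by
    apply monotoneOn_of_deriv_nonneg (convex_Icc _ _)
    · intro t ht
      have h1 : (1 : ℝ) + t ≠ 0 := by nlinarith [ht.1]
      have h2 : (1 : ℝ) - t ≠ 0 := by nlinarith [ht.2]
      have c1 : ContinuousWithinAt (fun t : ℝ => Real.log (1 + t)) (Icc (0:ℝ) (1/2)) t :=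
        (((continuous_const.add continuous_id).continuousAt).log h1).continuousWithinAt
      have c2 : ContinuousWithinAt (fun t : ℝ => Real.log (1 - t)) (Icc (0:ℝ) (1/2)) t :=
        (((continuous_const.sub continuous_id).continuousAt).log h2).continuousWithinAt
      exact (c1.sub c2).sub ((continuous_const.mul continuous_id).continuousWithinAt)
    · rw [interior_Icc]
      exact fun t ht => (hQder t ht).differentiableAt.differentiableWithinAt
    · rw [interior_Icc]
      intro t ht
      rw [(hQder t ht).deriv]
      have h1 : (0:ℝ) < 1 + t := by linarith [ht.1]
      have h2 : (0:ℝ) < 1 - t := by linarith [ht.2]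
      rw [div_add_div _ _ h1.ne' h2.ne', sub_nonneg, le_div_iff₀ (by positivity)]
      nlinarith [sq_nonneg t]
  have h0 : Q 0 = 0 := by simp [hQ]
  have h1 := hmono (left_mem_Icc.mpr (by norm_num)) hs hs.1
  rw [h0] at h1
  simp only [hQ] at h1
  linarith

lemma inv_le_log_diff (a : ℝ) (ha : 1 ≤ a) :
    1 / a ≤ Real.log (a + 1/2) - Real.log (a - 1/2) := by
  have ha0 : (0:ℝ) < a := by linarith
  have hs : (1/(2*a)) ∈ Icc (0:ℝ) (1/2) := by
    constructor
    · positivity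
    · rw [div_le_div_iff₀ (by positivity) (by norm_num)]
      linarith
  have key := log_two_s (1/(2*a)) hs
  have e1 : a + 1/2 = a * (1 + 1/(2*a)) := by field_simp
  have e2 : a - 1/2 = a * (1 - 1/(2*a)) := by field_simp
  have p1 : (0:ℝ) < 1 + 1/(2*a) := by positivity
  have p2 : (0:ℝ) < 1 - 1/(2*a) := by
    have := hs.2; linarith
  rw [e1, e2, Real.log_mul ha0.ne' p1.ne', Real.log_mul ha0.ne' p2.ne']
  have : 2 * (1/(2*a)) = 1/a := by field_simp
  linarith [key, this ▸ key]

lemma psi_ge (x : ℝ) (hx : 0 < x) : Real.log (x + 1/2) ≤ deriv f (x + 1) := by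
  have key : ∀ n : ℕ, Real.log (x + 1/2) ≤
      deriv f (x + 1) + (Real.log (x + 1/2 + n) - Real.log (x + n)) := by
    intro n
    have hsum : deriv f (x + 1 + n) = deriv f (x + 1) + ∑ k ∈ Finset.range n, 1/(x+1+k) :=
      hder_sum (x+1) (by linarith) n
    have hLB : Real.log (x + n) ≤ deriv f (x + 1 + n) := by
      have := slopeLB (x + n) (by positivity)
      have e : x + n + 1 = x + 1 + n := by ring
      rwa [e] at this
    have hsum_le : ∑ k ∈ Finset.range n, 1/(x+1+(k:ℝ)) ≤
        Real.log (x + 1/2 + n) - Real.log (x + 1/2) := by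
      have tele : ∑ k ∈ Finset.range n,
          (Real.log (x + 1/2 + (k+1 : ℕ)) - Real.log (x + 1/2 + k)) =
          Real.log (x + 1/2 + n) - Real.log (x + 1/2 + (0:ℕ)) :=
        Finset.sum_range_sub (fun k : ℕ => Real.log (x + 1/2 + k)) n
    -- rewrite the telescoped sum
      have step : ∀ k ∈ Finset.range n, 1/(x+1+(k:ℝ)) ≤
          Real.log (x + 1/2 + (k+1 : ℕ)) - Real.log (x + 1/2 + k) := by
        intro k _
        have := inv_le_log_diff (x + 1 + k)
          (by have hk : (0:ℝ) ≤ k := Nat.cast_nonneg k; linarith)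
        have e1 : x + 1 + (k:ℝ) + 1/2 = x + 1/2 + ((k:ℕ)+1 : ℕ) := by push_cast; ring
        have e2 : x + 1 + (k:ℝ) - 1/2 = x + 1/2 + (k:ℕ) := by push_cast; ring
        rwa [e1, e2] at this
      calc ∑ k ∈ Finset.range n, 1/(x+1+(k:ℝ))
          ≤ ∑ k ∈ Finset.range n,
            (Real.log (x + 1/2 + (k+1 : ℕ)) - Real.log (x + 1/2 + k)) :=
            Finset.sum_le_sum step
        _ = Real.log (x + 1/2 + n) - Real.log (x + 1/2) := by rw [tele]; norm_num
    have := hLB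
    rw [hsum] at this
    linarith
  have htend : Tendsto (fun n : ℕ =>
      deriv f (x + 1) + (Real.log (x + 1/2 + n) - Real.log (x + n)))
      atTop (𝓝 (deriv f (x + 1))) := by
    have h0 : Tendsto (fun n : ℕ => Real.log (x + 1/2 + n) - Real.log (x + n))
        atTop (𝓝 0) := by
      have hratio : Tendsto (fun n : ℕ => (x + 1/2 + n) / (x + n)) atTop (𝓝 1) := by
        have h1 : Tendsto (fun n : ℕ => (x + (n:ℝ))) atTop atTop :=
          tendsto_atTop_add_const_left _ _ tendsto_natCast_atTop_atTop
        have h2 : Tendsto (fun n : ℕ => (1:ℝ)/2 / (x + n)) atTop (𝓝 0) :=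
          Tendsto.div_atTop tendsto_const_nhds h1
        have := h2.const_add (1:ℝ)
        rw [add_zero] at this
        refine this.congr (fun n => ?_)
        have hxn : x + (n:ℝ) ≠ 0 := by positivity
        field_simp
        ring
      have hcont : Tendsto (fun n : ℕ => Real.log ((x + 1/2 + n) / (x + n)))
          atTop (𝓝 0) := by
        have := (Real.continuousAt_log one_ne_zero).tendsto.comp hratio
        simpa [Function.comp_def] using this
      refine hcont.congr (fun n => ?_)
      have h1 : x + 1/2 + (n:ℝ) ≠ 0 := by positivity
      have h2 : x + (n:ℝ) ≠ 0 := by positivity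
      rw [Real.log_div h1 h2]
    have := h0.const_add (deriv f (x + 1))
    rwa [add_zero] at this
  exact ge_of_tendsto' htend key

noncomputable def h : ℝ → ℝ :=
  fun x => f (x + 1) - (x + 1/2) * Real.log (x + 1/2) + (x + 1/2)

lemma hasDerivAt_h {x : ℝ} (hx : -(1/2) < x) :
    HasDerivAt h (deriv f (x + 1) - Real.log (x + 1/2)) x := by
  have hx1 : (0:ℝ) < x + 1 := by linarith
  have hx2 : (0:ℝ) < x + 1/2 := by linarith
  have d1 : HasDerivAt (fun y : ℝ => f (y + 1)) (deriv f (x + 1)) x := by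
    have hg : HasDerivAt (fun y : ℝ => y + 1) 1 x := (hasDerivAt_id x).add_const 1
    have hf := (hder hx1).hasDerivAt
    simpa [Function.comp_def] using (hf.comp x hg)
  have d2 : HasDerivAt (fun y : ℝ => (y + 1/2) * Real.log (y + 1/2))
      (Real.log (x + 1/2) + 1) x := by
    have hg : HasDerivAt (fun y : ℝ => y + 1/2) 1 x := (hasDerivAt_id x).add_const (1/2)
    have hl : HasDerivAt (fun y : ℝ => Real.log (y + 1/2)) (1/(x+1/2)) x := by
      simpa using hg.log hx2.ne'
    have := hg.mul hl
    refine this.congr_deriv ?_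
    rw [one_mul, mul_one_div, div_self hx2.ne']
  have d3 : HasDerivAt (fun y : ℝ => y + 1/2) 1 x := (hasDerivAt_id x).add_const (1/2)
  have := (d1.sub d2).add d3
  exact this.congr_deriv (by ring)

lemma hmono : MonotoneOn h (Ici (0:ℝ)) := by
  apply monotoneOn_of_deriv_nonneg (convex_Ici _)
  · intro y hy
    have : -(1/2 : ℝ) < y := by simp at hy; linarith
    exact (hasDerivAt_h this).continuousAt.continuousWithinAt
  · rw [interior_Ici]
    intro y hy
    exact (hasDerivAt_h (by simp at hy; linarith)).differentiableAt.differentiableWithinAt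
  · rw [interior_Ici]
    intro y hy
    rw [(hasDerivAt_h (by simp at hy; linarith)).deriv]
    have := psi_ge y (by simpa using hy)
    linarith

lemma h_zero : h 0 = 1/2 * Real.log 2 + 1/2 := by
  have : f 1 = 0 := by simp [f, Real.Gamma_one]
  simp only [h, zero_add, this]
  rw [show (1:ℝ)/2 = 2⁻¹ by norm_num, Real.log_inv]
  ring

lemma h_tendsto : Tendsto (fun n : ℕ => h n) atTop (𝓝 (Real.log (Real.sqrt (2*π)))) := by
  have key : ∀ n : ℕ, 1 ≤ n → h n = Real.log (Stirling.stirlingSeq n)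
      + 1/2 * Real.log 2 + 1/2 - ((n:ℝ) + 1/2) * Real.log (1 + (1/2)/(n:ℝ)) := by
    intro n hn
    have hn0 : (0:ℝ) < n := by exact_mod_cast hn
    have hfact : f ((n:ℝ) + 1) = Real.log (Nat.factorial n : ℝ) := by
      simp [f, Real.Gamma_nat_eq_factorial]
    have hstir := Stirling.log_stirlingSeq_formula n
    have hlog2n : Real.log (2 * (n:ℝ)) = Real.log 2 + Real.log n :=
      Real.log_mul two_ne_zero hn0.ne'
    have hlogne : Real.log ((n:ℝ) / Real.exp 1) = Real.log n - 1 := by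
      rw [Real.log_div hn0.ne' (Real.exp_ne_zero 1), Real.log_exp]
    have hsplit : Real.log ((n:ℝ) + 1/2) = Real.log n + Real.log (1 + (1/2)/(n:ℝ)) := by
      rw [← Real.log_mul hn0.ne' (by positivity)]
      congr 1
      field_simp
    have hformula : Real.log (Nat.factorial n : ℝ) = Real.log (Stirling.stirlingSeq n)
        + 1/2 * Real.log (2*n) + (n:ℝ) * Real.log ((n:ℝ)/Real.exp 1) := by
      rw [hstir]; ring
    simp only [h, hfact, hformula, hlog2n, hlogne, hsplit]
    ring
  have l1 : Tendsto (fun n : ℕ => Real.log (Stirling.stirlingSeq n)) atTop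
      (𝓝 (Real.log (Real.sqrt π))) :=
    ((Real.continuousAt_log (Real.sqrt_pos.mpr pi_pos).ne').tendsto.comp
      Stirling.tendsto_stirlingSeq_sqrt_pi)
  have l2 : Tendsto (fun n : ℕ => ((n:ℝ) + 1/2) * Real.log (1 + (1/2)/(n:ℝ))) atTop
      (𝓝 (1/2)) := by
    have la : Tendsto (fun n : ℕ => (n:ℝ) * Real.log (1 + (1/2)/(n:ℝ))) atTop (𝓝 (1/2)) :=
      (Real.tendsto_mul_log_one_add_div_atTop (1/2)).comp tendsto_natCast_atTop_atTop
    have lb : Tendsto (fun n : ℕ => Real.log (1 + (1/2)/(n:ℝ))) atTop (𝓝 0) := by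
      have hquot : Tendsto (fun n : ℕ => 1 + (1/2)/(n:ℝ)) atTop (𝓝 1) := by
        have h2 : Tendsto (fun n : ℕ => (1/2 : ℝ)/(n:ℝ)) atTop (𝓝 0) :=
          Tendsto.div_atTop tendsto_const_nhds tendsto_natCast_atTop_atTop
        have := h2.const_add (1:ℝ)
        rwa [add_zero] at this
      have := (Real.continuousAt_log one_ne_zero).tendsto.comp hquot
      simpa [Function.comp_def] using this
    have hsum := la.add (lb.const_mul (1/2 : ℝ))
    rw [mul_zero, add_zero] at hsum
    exact hsum.congr (fun n => by ring)
  have total : Tendsto (fun n : ℕ => Real.log (Stirling.stirlingSeq n)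
      + 1/2 * Real.log 2 + 1/2 - ((n:ℝ) + 1/2) * Real.log (1 + (1/2)/(n:ℝ))) atTop
      (𝓝 (Real.log (Real.sqrt π) + 1/2 * Real.log 2 + 1/2 - 1/2)) :=
    ((l1.add_const _).add_const _).sub l2
  have hval : Real.log (Real.sqrt π) + 1/2 * Real.log 2 + 1/2 - 1/2
      = Real.log (Real.sqrt (2*π)) := by
    rw [Real.sqrt_eq_rpow, Real.sqrt_eq_rpow, Real.log_rpow pi_pos,
      Real.log_rpow (by positivity), Real.log_mul two_ne_zero pi_pos.ne']
    ring
  rw [← hval]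
  refine total.congr' ?_
  filter_upwards [eventually_ge_atTop 1] with n hn
  exact (key n hn).symm

lemma h_le_limit (x : ℝ) (hx : 0 ≤ x) : h x ≤ Real.log (Real.sqrt (2*π)) := by
  refine ge_of_tendsto h_tendsto ?_
  filter_upwards [eventually_ge_atTop ⌈x⌉₊] with n hn
  refine hmono (mem_Ici.mpr hx) (mem_Ici.mpr (Nat.cast_nonneg n)) ?_
  exact (Nat.le_ceil x).trans (by exact_mod_cast hn)

end BatirAux

open BatirAux in
theorem batir_first_inequality (x : ℝ) (hx : 0 < x) :
    Real.sqrt (2 * Real.exp 1) * ((x + 1/2) / Real.exp 1) ^ (x + 1/2)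
        ≤ Real.Gamma (1 + x) ∧
    Real.Gamma (1 + x)
        ≤ Real.sqrt (2 * π) * ((x + 1/2) / Real.exp 1) ^ (x + 1/2) := by
  have ha : (0:ℝ) < x + 1/2 := by linarith
  have hx1 : (0:ℝ) < x + 1 := by linarith
  have hΓ : 0 < Real.Gamma (x + 1) := Real.Gamma_pos_of_pos hx1
  have e1 : Real.Gamma (1 + x) = Real.exp (f (x + 1)) := by
    rw [show (1:ℝ) + x = x + 1 by ring]
    exact (Real.exp_log hΓ).symm
  have e2 : ((x + 1/2) / Real.exp 1) ^ (x + 1/2)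
      = Real.exp ((x + 1/2) * (Real.log (x + 1/2) - 1)) := by
    rw [Real.rpow_def_of_pos (by positivity),
      Real.log_div ha.ne' (Real.exp_ne_zero 1), Real.log_exp]
    ring_nf
  have e3 : Real.sqrt (2 * Real.exp 1) = Real.exp (1/2 * Real.log 2 + 1/2) := by
    rw [Real.sqrt_eq_rpow, Real.rpow_def_of_pos (by positivity),
      Real.log_mul two_ne_zero (Real.exp_ne_zero 1), Real.log_exp]
    ring_nf
  have e4 : Real.sqrt (2 * π) = Real.exp (Real.log (Real.sqrt (2*π))) :=
    (Real.exp_log (Real.sqrt_pos.mpr (by positivity))).symm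
  have hfx : f (x + 1) = h x + ((x + 1/2) * Real.log (x + 1/2) - (x + 1/2)) := by
    simp only [h]; ring
  have hlow : h 0 ≤ h x := hmono (self_mem_Ici) (mem_Ici.mpr hx.le) hx.le
  have hup : h x ≤ Real.log (Real.sqrt (2*π)) := h_le_limit x hx.le
  constructor
  · rw [e1, e2, e3, ← Real.exp_add, Real.exp_le_exp, hfx]
    have hl2 := hlow
    rw [h_zero] at hl2
    nlinarith [hl2]
  · rw [e1, e2, e4, ← Real.exp_add, Real.exp_le_exp, hfx]
    nlinarith [hup]
end

section
/- Let s ≥ 1, a ∈ (1/2, 1], and let G be a Gamma(2a−1) random variable (rate 1). Then E[(2(G/s)/(π·sin(G/s)))^{2(1−a)} · 1_{G/s ≤ π/2}] ≥ (2/π)·(1 − 2(2a−1)/(sπ)) ≥ (2/π)·(1 − 2/π) > 0. -/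
open Real MeasureTheory Set ProbabilityTheory
open scoped ENNReal

lemma gamma_mean {k : ℝ} (hk : 0 < k) :
    ∫⁻ x, ENNReal.ofReal x ∂(gammaMeasure k 1) = ENNReal.ofReal k := by
  have hm : Measurable (gammaPDF k 1) := (measurable_gammaPDFReal k 1).ennreal_ofReal
  rw [gammaMeasure, lintegral_withDensity_eq_lintegral_mul _ hm ENNReal.measurable_ofReal]
  have h0 : ∀ x ∈ Iic (0:ℝ), gammaPDF k 1 x * ENNReal.ofReal x = 0 := by
    intro x hx
    rcases lt_or_eq_of_le (mem_Iic.mp hx) with h | h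
    · rw [gammaPDF_of_neg h, zero_mul]
    · simp [h]
  have hsplit : (∫⁻ x, gammaPDF k 1 x * ENNReal.ofReal x) =
      ∫⁻ x in Ioi (0:ℝ), gammaPDF k 1 x * ENNReal.ofReal x := by
    rw [← lintegral_add_compl (μ := volume)
        (f := fun x => gammaPDF k 1 x * ENNReal.ofReal x) measurableSet_Ioi]
    have : (∫⁻ x in (Ioi (0:ℝ))ᶜ, gammaPDF k 1 x * ENNReal.ofReal x) = 0 := by
      rw [compl_Ioi, setLIntegral_congr_fun_ae measurableSet_Iic (ae_of_all _ h0), lintegral_zero]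
    rw [this, add_zero]
  simp only [Pi.mul_apply]
  rw [hsplit]
  have heq : ∀ x ∈ Ioi (0:ℝ), gammaPDF k 1 x * ENNReal.ofReal x =
      ENNReal.ofReal ((1 / Gamma k) * (x ^ ((k+1)-1) * exp (-(1 * x)))) := by
    intro x hx
    have hx0 : (0:ℝ) ≤ x := (mem_Ioi.mp hx).le
    rw [gammaPDF_of_nonneg hx0, ← ENNReal.ofReal_mul (by positivity)]
    congr 1
    rw [Real.one_rpow]
    have : x ^ ((k+1)-1) = x ^ (k-1) * x := by
      rw [← Real.rpow_add_one (ne_of_gt (mem_Ioi.mp hx))]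
      ring_nf
    rw [this]
    ring
  rw [setLIntegral_congr_fun_ae measurableSet_Ioi (ae_of_all _ heq)]
  have hint : IntegrableOn (fun x : ℝ => (1 / Gamma k) * (x ^ ((k+1)-1) * exp (-(1 * x)))) (Ioi 0) := by
    apply Integrable.const_mul
    have := Real.GammaIntegral_convergent (s := k + 1) (by linarith)
    apply this.congr_fun _ measurableSet_Ioi
    intro x hx
    simp [mul_comm]
  rw [← ofReal_integral_eq_lintegral_ofReal hint]
  · rw [integral_const_mul, integral_rpow_mul_exp_neg_mul_Ioi (by linarith) one_pos,
      Real.Gamma_add_one hk.ne']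
    congr 1
    have hg : Gamma k ≠ 0 := (Real.Gamma_pos_of_pos hk).ne'
    rw [one_div (1:ℝ), inv_one, Real.one_rpow]
    field_simp
  · filter_upwards [ae_restrict_mem measurableSet_Ioi] with x hx
    have : (0:ℝ) < x := hx
    positivity

theorem acceptance_probability_bound (a s : ℝ)
    (hs : 1 ≤ s) (ha1 : 1/2 < a) (ha2 : a ≤ 1) :
    (2/π) * (1 - 2*(2*a - 1)/(s*π))
      ≤ ∫ g, Set.indicator {g : ℝ | g/s ≤ π/2}
          (fun g => (2*(g/s) / (π * Real.sin (g/s))) ^ (2*(1-a))) g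
          ∂(gammaMeasure (2*a - 1) 1) ∧
    (2/π) * (1 - 2/π) ≤ (2/π) * (1 - 2*(2*a - 1)/(s*π)) ∧
    0 < (2/π) * (1 - 2/π) := by
  have hπ : 0 < π := pi_pos
  have hπ3 : 3 < π := pi_gt_three
  have hs0 : 0 < s := lt_of_lt_of_le one_pos hs
  set k : ℝ := 2*a - 1 with hkdef
  have hk : 0 < k := by simp only [hkdef]; linarith
  have hk1 : k ≤ 1 := by simp only [hkdef]; linarith
  set t : ℝ := 2*(2*a - 1)/(s*π) with htdef
  have ht0 : 0 ≤ t := by positivity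
  have ht2π : t ≤ 2/π := by
    rw [htdef, div_le_div_iff₀ (by positivity) hπ]
    nlinarith
  have ht1 : t ≤ 1 := by
    refine ht2π.trans ?_
    rw [div_le_one hπ]; linarith
  set M : ℝ := π/2 * s with hMdef
  have hM : 0 < M := by positivity
  set μ := gammaMeasure k 1 with hμ
  have : IsProbabilityMeasure μ := isProbabilityMeasure_gammaMeasure hk one_pos
  set S : Set ℝ := {g : ℝ | g/s ≤ π/2} with hSdef
  set φ : ℝ → ℝ := fun g => (2*(g/s) / (π * Real.sin (g/s))) ^ (2*(1-a)) with hφdef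
  have hmem : ∀ g : ℝ, g ∈ S ↔ g ≤ M := fun g => div_le_iff₀ hs0
  -- core pointwise bounds
  have hcore : ∀ g : ℝ, 0 < g → g ≤ M → 2/π ≤ φ g ∧ φ g ≤ 1 := by
    intro g hg hgM
    set z : ℝ := g/s with hzdef
    have hz0 : 0 < z := by positivity
    have hz2 : z ≤ π/2 := by rw [hzdef, div_le_iff₀ hs0]; linarith
    have hsin : 0 < Real.sin z := sin_pos_of_pos_of_lt_pi hz0 (by linarith)
    have hsz : Real.sin z ≤ z := Real.sin_le hz0.le
    have hms : 2/π * z ≤ Real.sin z := Real.mul_le_sin hz0.le hz2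
    have hb1 : 2*z/(π * Real.sin z) ≤ 1 := by
      rw [div_le_one (by positivity)]
      have h := mul_le_mul_of_nonneg_left hms hπ.le
      have he : π * (2/π * z) = 2*z := by field_simp
      linarith [he ▸ h]
    have hb0 : 2/π ≤ 2*z/(π * Real.sin z) := by
      rw [div_le_div_iff₀ hπ (by positivity)]
      nlinarith
    have hbpos : 0 < 2*z/(π * Real.sin z) := by positivity
    have hp0 : 0 ≤ 2*(1-a) := by linarith
    have hp1 : 2*(1-a) ≤ 1 := by linarith
    constructor
    · calc 2/π ≤ 2*z/(π * Real.sin z) := hb0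
        _ = (2*z/(π * Real.sin z)) ^ (1:ℝ) := (Real.rpow_one _).symm
        _ ≤ (2*z/(π * Real.sin z)) ^ (2*(1-a)) :=
          Real.rpow_le_rpow_of_exponent_ge hbpos hb1 hp1
    · exact Real.rpow_le_one hbpos.le hb1 hp0
  set f : ℝ → ℝ := S.indicator φ with hfdef
  have hSmeas : MeasurableSet S := measurableSet_le (measurable_id.div_const s) measurable_const
  have hmφ : Measurable φ := by
    rw [hφdef]; fun_prop
  have hmf : Measurable f := hmφ.indicator hSmeas
  -- a.e. positivity of g under μ
  have hIic0 : μ (Iic (0:ℝ)) = 0 := by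
    rw [hμ, gammaMeasure, withDensity_apply _ measurableSet_Iic,
      setLIntegral_congr (Iio_ae_eq_Iic (a := (0:ℝ))).symm]
    exact lintegral_gammaPDF_of_nonpos le_rfl
  have haepos : ∀ᵐ g ∂μ, 0 < g := by
    rw [ae_iff]
    convert hIic0 using 2
    ext g; simp [not_lt]
  -- nonnegativity a.e.
  have hnn : 0 ≤ᵐ[μ] f := by
    filter_upwards [haepos] with g hg
    rw [hfdef]
    apply Set.indicator_apply_nonneg
    intro hgS
    have hz0 : 0 < g/s := by positivity
    have hsin : 0 < Real.sin (g/s) :=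
      sin_pos_of_pos_of_lt_pi hz0 (lt_of_le_of_lt hgS (by linarith))
    apply Real.rpow_nonneg
    positivity
  have hrepr : (∫ g, f g ∂μ) = (∫⁻ g, ENNReal.ofReal (f g) ∂μ).toReal :=
    integral_eq_lintegral_of_nonneg_ae hnn hmf.aestronglyMeasurable
  -- upper bound for finiteness
  have hub : (∫⁻ g, ENNReal.ofReal (f g) ∂μ) ≤ 1 := by
    have : (∫⁻ g, ENNReal.ofReal (f g) ∂μ) ≤ ∫⁻ _, 1 ∂μ := by
      apply lintegral_mono_ae
      filter_upwards [haepos] with g hg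
      rw [hfdef]
      by_cases hgS : g ∈ S
      · rw [Set.indicator_of_mem hgS]
        rw [← ENNReal.ofReal_one]
        exact ENNReal.ofReal_le_ofReal (hcore g hg ((hmem g).mp hgS)).2
      · rw [Set.indicator_of_notMem hgS]; simp
    simpa using this
  have hfin : (∫⁻ g, ENNReal.ofReal (f g) ∂μ) ≠ ⊤ :=
    (hub.trans_lt ENNReal.one_lt_top).ne
  -- Markov bound
  have hmean : ∫⁻ x, ENNReal.ofReal x ∂μ = ENNReal.ofReal k := gamma_mean hk
  have hmark : μ (Ioi M) ≤ ENNReal.ofReal t := by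
    have h1 := mul_meas_ge_le_lintegral₀ (μ := μ)
      (f := fun x => ENNReal.ofReal x) (ENNReal.measurable_ofReal.comp measurable_id).aemeasurable
      (ENNReal.ofReal M)
    rw [hmean] at h1
    have hsub : μ (Ioi M) ≤ μ {x | ENNReal.ofReal M ≤ ENNReal.ofReal x} := by
      apply measure_mono
      intro x hx
      exact ENNReal.ofReal_le_ofReal (le_of_lt hx)
    have h2 : ENNReal.ofReal M * μ (Ioi M) ≤ ENNReal.ofReal k :=
      le_trans (mul_le_mul_right hsub _) h1
    have h3 : μ (Ioi M) ≤ ENNReal.ofReal k / ENNReal.ofReal M := by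
      rw [ENNReal.le_div_iff_mul_le (Or.inl (by simp [hM])) (Or.inl ENNReal.ofReal_ne_top),
        mul_comm]
      exact h2
    refine h3.trans ?_
    rw [← ENNReal.ofReal_div_of_pos hM]
    apply ENNReal.ofReal_le_ofReal
    rw [htdef, hMdef, hkdef]
    rw [div_le_div_iff₀ (by positivity) (by positivity)]
    ring_nf
    nlinarith [sq_nonneg s, sq_nonneg π]
  -- lower bound on μ (Ioc 0 M)
  have hIoc : 1 - ENNReal.ofReal t ≤ μ (Ioc 0 M) := by
    have hcover : (1:ℝ≥0∞) ≤ μ (Ioc 0 M) + ENNReal.ofReal t := by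
      have huniv : (univ : Set ℝ) = Ioc 0 M ∪ (Iic 0 ∪ Ioi M) := by
        ext x
        simp only [mem_univ, mem_union, mem_Ioc, mem_Iic, mem_Ioi, true_iff]
        by_cases h1 : x ≤ 0
        · tauto
        · by_cases h2 : x ≤ M
          · left; exact ⟨not_le.mp h1, h2⟩
          · right; right; exact not_le.mp h2
      calc (1:ℝ≥0∞) = μ univ := (measure_univ).symm
        _ = μ (Ioc 0 M ∪ (Iic 0 ∪ Ioi M)) := by rw [← huniv]
        _ ≤ μ (Ioc 0 M) + μ (Iic 0 ∪ Ioi M) := measure_union_le _ _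
        _ ≤ μ (Ioc 0 M) + (μ (Iic 0) + μ (Ioi M)) :=
            add_le_add_right (measure_union_le _ _) _
        _ = μ (Ioc 0 M) + μ (Ioi M) := by rw [hIic0, zero_add]
        _ ≤ μ (Ioc 0 M) + ENNReal.ofReal t := add_le_add_right hmark _
    exact tsub_le_iff_right.mpr hcover
  -- main lower bound on the lintegral
  have hmain : ENNReal.ofReal (2/π) * (1 - ENNReal.ofReal t)
      ≤ ∫⁻ g, ENNReal.ofReal (f g) ∂μ := by
    have hstep : (∫⁻ g, (Ioc (0:ℝ) M).indicator (fun _ => ENNReal.ofReal (2/π)) g ∂μ)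
        ≤ ∫⁻ g, ENNReal.ofReal (f g) ∂μ := by
      apply lintegral_mono
      intro g
      by_cases hg : g ∈ Ioc (0:ℝ) M
      · rw [Set.indicator_of_mem hg]
        have hgS : g ∈ S := (hmem g).mpr hg.2
        show ENNReal.ofReal (2/π) ≤ ENNReal.ofReal (f g)
        rw [hfdef, Set.indicator_of_mem hgS]
        exact ENNReal.ofReal_le_ofReal (hcore g hg.1 hg.2).1
      · rw [Set.indicator_of_notMem hg]; simp
    have heval : (∫⁻ g, (Ioc (0:ℝ) M).indicator (fun _ => ENNReal.ofReal (2/π)) g ∂μ)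
        = ENNReal.ofReal (2/π) * μ (Ioc 0 M) := by
      rw [lintegral_indicator measurableSet_Ioc, setLIntegral_const, mul_comm]
    calc ENNReal.ofReal (2/π) * (1 - ENNReal.ofReal t)
        ≤ ENNReal.ofReal (2/π) * μ (Ioc 0 M) := mul_le_mul_right hIoc _
      _ = _ := heval.symm
      _ ≤ _ := hstep
  refine ⟨?_, ?_, ?_⟩
  · have heq : ((ENNReal.ofReal (2/π) * (1 - ENNReal.ofReal t))).toReal = (2/π) * (1 - t) := by
      rw [← ENNReal.ofReal_one, ← ENNReal.ofReal_sub _ ht0,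
        ← ENNReal.ofReal_mul (by positivity), ENNReal.toReal_ofReal (by nlinarith)]
    calc (2/π) * (1 - t) = ((ENNReal.ofReal (2/π) * (1 - ENNReal.ofReal t))).toReal := heq.symm
      _ ≤ (∫⁻ g, ENNReal.ofReal (f g) ∂μ).toReal := ENNReal.toReal_mono hfin hmain
      _ = ∫ g, f g ∂μ := hrepr.symm
  · have h1 : 0 ≤ 2/π := by positivity
    nlinarith
  · have h1 : 2/π < 1 := by rw [div_lt_one hπ]; linarith
    have h2 : 0 < 2/π := by positivity
    nlinarith
end
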